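/- arXiv:2108.05569 — 7 statements merged into one kernel-verified Lean document; each statement's English description precedes it below -/
import Mathlib

section
/- Let (X, H) be a hypothesis class. The following are equivalent: (1) for every ε with 0 < ε < 1/2 there is a constant c = c(ε) > 0 such that every finite nonempty A ⊆ H contains a subset B with |B| ≥ c|A| which is ε-good; (2) for some ε with 0 < ε < 1/2 and some constant c > 0, every finite nonempty A ⊆ H contains a subset B with |B| ≥ c|A| which is ε-good; (3) H is a Littlestone class; (4) for every ε with 0 < ε < 1/2 there is a constant c = c(ε) > 0 such that every finite nonempty A ⊆ X contains a subset B with |B| ≥ c|A| which is ε-good; (5) for some ε with 0 < ε < 1/2 and some constant c > 0, every finite nonempty A ⊆ X contains a subset B with |B| ≥ c|A| which is ε-good. -/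
open scoped Classical

/-- `h` realizes the branch `y` in the binary tree with node labels given by `t`
(the node reached by the bit string `s` is labeled `t s`). -/
def Realizes {X : Type*} (t : List Bool → X) (h : X → Bool) (y : List Bool) : Prop :=
  ∀ i : Fin y.length, h (t (y.take i)) = y.get i

/-- `H` shatters some complete binary mistake tree of depth `d`. -/
def Shatters {X : Type*} (H : Set (X → Bool)) (d : ℕ) : Prop :=
  ∃ t : List Bool → X, ∀ y : List Bool, y.length = d → ∃ h ∈ H, Realizes t h y

/-- Littlestone dimension: supremum of depths of shattered mistake trees
(`⊥` for the empty class, `⊤` if unbounded). -/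
noncomputable def Ldim {X : Type*} (H : Set (X → Bool)) : WithBot ℕ∞ :=
  sSup {d : WithBot ℕ∞ | ∃ n : ℕ, Shatters H n ∧ d = ((n : ℕ∞) : WithBot ℕ∞)}

/-- A finite set `A` of hypotheses is ε-good: every point `x` splits it ε-unevenly. -/
def EpsGoodH {X : Type*} (ε : ℝ) (A : Finset (X → Bool)) : Prop :=
  ∀ x : X, ((A.filter fun h => h x = true).card : ℝ) < ε * A.card ∨
           ((A.filter fun h => h x = false).card : ℝ) < ε * A.card

/-- A finite set `B ⊆ X` is ε-good w.r.t. the class `H`. -/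
def EpsGoodX {X : Type*} (H : Set (X → Bool)) (ε : ℝ) (B : Finset X) : Prop :=
  ∀ h ∈ H, ((B.filter fun b => h b = true).card : ℝ) < ε * B.card ∨
           ((B.filter fun b => h b = false).card : ℝ) < ε * B.card

/-!
A class shattering no tree of depth `d` has large ε-good subsets: if `A` is not ε-good, some point
splits it into two parts of size at least `ε|A|`, one of which shatters no tree of depth `d - 1`,
and recursing yields an ε-good subset of size `ε^d |A|`. Conversely, a class shattering trees of
every depth contains half graphs, hence thresholds `R (a i) (x j) = (i ≤ j)`, of every length; the
median point of a threshold splits every subset of it evenly, so its ε-good subsets have size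
`O(1 / (1 - 2ε))`. Thresholds are symmetric under exchanging points and hypotheses, and a threshold
of length `2^n` shatters a tree of depth `n` by binary search, so the dual of a Littlestone class is
again Littlestone; this carries both directions over to ε-good sets of points.
-/

open Finset

theorem Finset.exists_mem_card_filter_le_eq {ι : Type*} [LinearOrder ι] (s : Finset ι) {q : ℕ}
    (hq : 0 < q) (hqs : q ≤ #s) : ∃ m ∈ s, #(s.filter (· ≤ m)) = q := by
  induction s using Finset.induction_on_max with
  | empty => simp at hqs; omega
  | insert a s ha ih =>
    have has : a ∉ s := fun h => lt_irrefl a (ha a h)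
    rw [card_insert_of_notMem has] at hqs
    rcases hqs.lt_or_eq with hlt | heq
    · obtain ⟨m, hm, hcard⟩ := ih (by omega)
      refine ⟨m, mem_insert_of_mem hm, ?_⟩
      rw [filter_insert, if_neg (not_le.mpr (ha m hm)), hcard]
    · refine ⟨a, mem_insert_self a s, ?_⟩
      rw [filter_true_of_mem fun y hy => ?_, card_insert_of_notMem has, heq]
      rcases mem_insert.mp hy with rfl | hy
      exacts [le_rfl, (ha y hy).le]

/-- `EpsGoodH ε` is the case `R = fun h x => h x`, `P = fun _ => True`, and `EpsGoodX H ε` the case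
`R = fun x h => h x`, `P = (· ∈ H)`. -/
def IsEpsGood {α β : Type*} (R : α → β → Bool) (P : β → Prop) (ε : ℝ) (B : Finset α) : Prop :=
  ∀ p, P p → (#(B.filter (R · p = true)) : ℝ) < ε * #B ∨
    (#(B.filter (R · p = false)) : ℝ) < ε * #B

section Trees

variable {α β : Type*} {R : α → β → Bool} {C C' : α → Prop} {P P' : β → Prop} {m n : ℕ}

/-- A mistake tree of depth `n` with node labels in `P`, shattered by realizers from `C`, where
a realizer `a` assigns the bit `R a b` to the node label `b`. Taking evaluation in either order
for `R` covers both a class and its dual. -/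
def HasShatteredTree (R : α → β → Bool) (C : α → Prop) (P : β → Prop) (n : ℕ) : Prop :=
  ∃ t : List Bool → β, (∀ s : List Bool, s.length < n → P (t s)) ∧
    ∀ y : List Bool, y.length = n → ∃ a, C a ∧ ∀ i : Fin y.length, R a (t (y.take i)) = y.get i

namespace HasShatteredTree

theorem mono (hC : ∀ a, C a → C' a) (hP : ∀ b, P b → P' b) (h : HasShatteredTree R C P n) :
    HasShatteredTree R C' P' n := by
  obtain ⟨t, ht, hr⟩ := h
  refine ⟨t, fun s hs => hP _ (ht s hs), fun y hy => ?_⟩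
  obtain ⟨a, ha, hra⟩ := hr y hy
  exact ⟨a, hC a ha, hra⟩

theorem of_le (hmn : m ≤ n) (h : HasShatteredTree R C P n) : HasShatteredTree R C P m := by
  obtain ⟨t, ht, hr⟩ := h
  refine ⟨t, fun s hs => ht s (hs.trans_le hmn), fun y hy => ?_⟩
  obtain ⟨a, ha, hra⟩ := hr (y ++ List.replicate (n - m) false) (by simp [hy, hmn])
  refine ⟨a, ha, fun i => ?_⟩
  have hi : (i : ℕ) < y.length := i.isLt
  simpa [List.take_append_of_le_length hi.le, List.getElem_append_left hi]
    using hra ⟨i, by simp; omega⟩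

theorem exists_realizer (h : HasShatteredTree R C P n) : ∃ a, C a := by
  obtain ⟨t, -, hr⟩ := h
  obtain ⟨a, ha, -⟩ := hr (List.replicate n false) (by simp)
  exact ⟨a, ha⟩

theorem zero (b : β) (h : ∃ a, C a) : HasShatteredTree R C P 0 := by
  obtain ⟨a, ha⟩ := h
  exact ⟨fun _ => b, fun s hs => absurd hs (by omega),
    fun y hy => ⟨a, ha, fun i => absurd i.isLt (by simp [hy])⟩⟩

theorem succ_iff : HasShatteredTree R C P (n + 1) ↔
    ∃ p, P p ∧ ∀ b, HasShatteredTree R (fun a => C a ∧ R a p = b) P n := by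
  constructor
  · rintro ⟨t, ht, hr⟩
    refine ⟨t [], ht [] (by simp), fun b => ⟨fun s => t (b :: s),
      fun s hs => ht (b :: s) (by simpa using hs), fun y hy => ?_⟩⟩
    obtain ⟨a, ha, hra⟩ := hr (b :: y) (by simp [hy])
    refine ⟨a, ⟨ha, by simpa using hra ⟨0, by simp⟩⟩, fun i => ?_⟩
    simpa [List.take_succ_cons] using hra i.succ
  · rintro ⟨p, hp, hsub⟩
    choose t ht hr using hsub
    refine ⟨fun | [] => p | b :: s => t b s, fun | [], _ => hp | b :: s, hs => ?_,
      fun | [], hy => by simp at hy | b :: y, hy => ?_⟩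
    · exact ht b s (by simpa using hs)
    · obtain ⟨a, ⟨ha, hap⟩, hra⟩ := hr b y (by simpa using hy)
      refine ⟨a, ha, fun ⟨i, hi⟩ => ?_⟩
      cases i with
      | zero => simpa using hap
      | succ i => simpa [List.take_succ_cons] using hra ⟨i, by simpa using hi⟩

theorem split_by (g : α) {m k : ℕ} (b : Bool) (h : HasShatteredTree R C P (m + k + 1)) :
    HasShatteredTree R C (fun q => P q ∧ R g q = b) m ∨
      HasShatteredTree R C (fun q => P q ∧ R g q = !b) k := by
  obtain ⟨N, hN⟩ : ∃ N, m + k = N := ⟨_, rfl⟩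
  induction N using Nat.strong_induction_on generalizing m k C b with
  | _ N ih =>
  obtain ⟨p, hp, hsub⟩ := succ_iff.mp h
  have key : ∀ m k b, m + k = N → R g p = b →
      HasShatteredTree R C (fun q => P q ∧ R g q = b) m ∨
        HasShatteredTree R C (fun q => P q ∧ R g q = !b) k := by
    intro m k b hmk hb
    cases m with
    | zero => exact .inl (zero p ((hsub true).exists_realizer.imp fun _ ha => ha.1))
    | succ m =>
      have hc : ∀ c, HasShatteredTree R (fun a => C a ∧ R a p = c)
          (fun q => P q ∧ R g q = b) m ∨ HasShatteredTree R C (fun q => P q ∧ R g q = !b) k :=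
        fun c => (ih (m + k) (by omega) b ((hsub c).of_le (by omega)) rfl).imp id
          (mono (fun _ ha => ha.1) fun _ => id)
      rcases hc false with h0 | hk
      · rcases hc true with h1 | hk
        · exact .inl (succ_iff.mpr ⟨p, ⟨hp, hb⟩, fun | false => h0 | true => h1⟩)
        · exact .inr hk
      · exact .inr hk
  by_cases hb : R g p = b
  · exact key m k b hN hb
  · simpa [or_comm] using key k m (!b) (by omega) (by cases b <;> simpa using hb)

/-- One rung of a half graph. A realizer `a` of the `false` subtree cuts the `true` subtree; the rung
is either the root itself or the root of a deep part whose labels `q` have `R a q = true`. -/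
theorem exists_rung (h : HasShatteredTree R C P (2 * m + 3)) :
    ∃ x a v, P x ∧ C a ∧ R a x = v ∧
      HasShatteredTree R (fun a' => C a' ∧ R a' x = !v) (fun q => P q ∧ R a q = v) m := by
  obtain ⟨p, hp, hsub⟩ := succ_iff.mp h
  obtain ⟨a, ha, hap⟩ := (hsub false).exists_realizer
  rcases ((hsub true).of_le (by omega) : HasShatteredTree _ _ _ (m + (m + 1) + 1)).split_by a false
    with hm | hm
  · exact ⟨p, a, false, hp, ha, hap, hm.mono (fun _ h => ⟨h.1, by simpa using h.2⟩) fun _ h => h⟩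
  · obtain ⟨q, ⟨hq, haq⟩, hqsub⟩ := succ_iff.mp hm
    exact ⟨q, a, true, hq, ha, haq, (hqsub false).mono (fun _ h => ⟨h.1.1, h.2⟩) fun _ h => h⟩

theorem exists_halfGraph (r : ℕ) (h : HasShatteredTree R C P (4 ^ (r + 1))) :
    ∃ (a : Fin r → α) (x : Fin r → β) (v : Fin r → Bool), (∀ i, C (a i)) ∧ (∀ j, P (x j)) ∧
      ∀ i j, R (a i) (x j) = if i ≤ j then v i else !v j := by
  induction r generalizing C P with
  | zero => exact ⟨Fin.elim0, Fin.elim0, Fin.elim0, Fin.rec0, Fin.rec0, Fin.rec0⟩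
  | succ r ih =>
    have h4 : 4 ≤ 4 ^ (r + 1) := Nat.le_self_pow (by omega) 4
    obtain ⟨x₀, a₀, v₀, hx₀, ha₀, hv₀, hres⟩ :=
      exists_rung (m := 4 ^ (r + 1)) (h.of_le (by rw [pow_succ 4 (r + 1)]; omega))
    obtain ⟨a, x, v, ha, hx, hav⟩ := ih hres
    refine ⟨Fin.cons a₀ a, Fin.cons x₀ x, Fin.cons v₀ v, Fin.cases ha₀ fun i => (ha i).1,
      Fin.cases hx₀ fun j => (hx j).1, fun i j => ?_⟩
    cases i using Fin.cases <;> cases j using Fin.cases <;> simp [hv₀, (ha _).2, (hx _).2, hav]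

end HasShatteredTree

theorem exists_isEpsGood_subset {ε : ℝ} (hε0 : 0 < ε) (hε1 : ε ≤ 1) (d : ℕ) (A : Finset α)
    (hA : A.Nonempty) (hd : ¬ HasShatteredTree R (· ∈ A) P d) :
    ∃ B ⊆ A, ε ^ d * #A ≤ #B ∧ IsEpsGood R P ε B := by
  induction d generalizing A with
  | zero => exact ⟨A, subset_rfl, by simp, fun p _ => absurd (.zero p hA) hd⟩
  | succ d ih =>
    by_cases hgood : IsEpsGood R P ε A
    · exact ⟨A, subset_rfl, mul_le_of_le_one_left (by positivity) (pow_le_one₀ hε0.le hε1), hgood⟩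
    simp only [IsEpsGood, not_forall, not_or, not_lt] at hgood
    obtain ⟨p, hp, htrue, hfalse⟩ := hgood
    have hlarge : ∀ b, ε * #A ≤ #(A.filter (R · p = b)) := fun | true => htrue | false => hfalse
    obtain ⟨b, hb⟩ : ∃ b, ¬ HasShatteredTree R (· ∈ A.filter (R · p = b)) P d := by
      by_contra! hall
      exact hd (HasShatteredTree.succ_iff.mpr
        ⟨p, hp, fun b => (hall b).mono (fun _ ha => mem_filter.mp ha) fun _ => id⟩)
    have hne : (A.filter (R · p = b)).Nonempty := by
      have := (mul_pos hε0 (Nat.cast_pos.mpr (card_pos.mpr hA))).trans_le (hlarge b)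
      exact card_pos.mp (by exact_mod_cast this)
    obtain ⟨B, hB, hBcard, hBgood⟩ := ih _ hne hb
    refine ⟨B, hB.trans (filter_subset _ _), ?_, hBgood⟩
    calc ε ^ (d + 1) * #A = ε ^ d * (ε * #A) := by ring
      _ ≤ ε ^ d * #(A.filter (R · p = b)) := by gcongr; exact hlarge b
      _ ≤ #B := hBcard

end Trees

section Thresholds

variable {α β ι : Type*} [LinearOrder ι] {R : α → β → Bool} {C : α → Prop} {P : β → Prop}
  {s t : Finset ι} {a : ι → α} {x : ι → β}

def IsThreshold (R : α → β → Bool) (s : Finset ι) (a : ι → α) (x : ι → β) : Prop :=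
  ∀ i ∈ s, ∀ j ∈ s, R (a i) (x j) = decide (i ≤ j)

namespace IsThreshold

theorem mono (h : IsThreshold R s a x) (hts : t ⊆ s) : IsThreshold R t a x :=
  fun i hi j hj => h i (hts hi) j (hts hj)

theorem injOn (h : IsThreshold R s a x) : Set.InjOn a s := by
  intro i hi j hj hij
  have hji : j ≤ i := by simpa [← hij, h i hi i hi] using h j hj i hi
  have hij : i ≤ j := by simpa [hij, h j hj j hj] using h i hi j hj
  exact le_antisymm hij hji

theorem flip {k : ℕ} {a : Fin k → α} {x : Fin k → β} (h : IsThreshold R univ a x) :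
    IsThreshold (fun b a => R a b) univ (x ∘ Fin.rev) (a ∘ Fin.rev) := fun i _ j _ => by
  simpa [Fin.rev_le_rev] using h (Fin.rev j) (mem_univ _) (Fin.rev i) (mem_univ _)

end IsThreshold

/-- Binary search: the median of a threshold splits it into two thresholds of half the size. -/
theorem HasShatteredTree.of_isThreshold {n : ℕ} (h : IsThreshold R s a x)
    (ha : ∀ i ∈ s, C (a i)) (hx : ∀ j ∈ s, P (x j)) (hs : 2 ^ n ≤ #s) :
    HasShatteredTree R C P n := by
  induction n generalizing s C with
  | zero =>
    obtain ⟨i, hi⟩ : s.Nonempty := card_pos.mp (by simpa using hs)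
    exact .zero (x i) ⟨a i, ha i hi⟩
  | succ n ih =>
    obtain ⟨m, hm, hcard⟩ := s.exists_mem_card_filter_le_eq (Nat.two_pow_pos n)
      (by rw [pow_succ] at hs; omega)
    have hsplit := card_filter_add_card_filter_not (s := s) (· ≤ m)
    refine succ_iff.mpr ⟨x m, hx m hm, fun b => ?_⟩
    refine ih (s := s.filter fun i => decide (i ≤ m) = b) (h.mono (filter_subset _ _))
      (fun i hi => ?_) (fun j hj => hx j (mem_filter.mp hj).1) ?_
    · obtain ⟨hi, hib⟩ := mem_filter.mp hi
      exact ⟨ha i hi, by rw [h i hi m hm, hib]⟩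
    · rw [pow_succ] at hs
      cases b <;> simp only [decide_eq_true_eq, decide_eq_false_iff_not] <;> omega

theorem IsThreshold.not_isEpsGood [DecidableEq α] {ε : ℝ} (h : IsThreshold R s a x)
    (hx : ∀ j ∈ s, P (x j)) {B : Finset α} (hB : B ⊆ s.image a) (hBcard : 1 ≤ (1 - 2 * ε) * #B) :
    ¬ IsEpsGood R P ε B := by
  obtain ⟨I, hIs, rfl⟩ := subset_image_iff.mp hB
  have hinj : Set.InjOn a I := h.injOn.mono (coe_subset.mpr hIs)
  rw [card_image_of_injOn hinj] at hBcard
  have hI0 : 0 < #I := by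
    by_contra! h0
    norm_num [Nat.le_zero.mp h0] at hBcard
  obtain ⟨m, hm, hcard⟩ := I.exists_mem_card_filter_le_eq (q := #I - #I / 2) (by omega) (by omega)
  have hsplit := card_filter_add_card_filter_not (s := I) (· ≤ m)
  have hcount : ∀ b,
      #((I.image a).filter (R · (x m) = b)) = #(I.filter fun i => decide (i ≤ m) = b) := by
    intro b
    rw [filter_image, card_image_of_injOn (hinj.mono (filter_subset _ _))]
    exact congrArg card (filter_congr fun i hi => by rw [(h.mono hIs) i hi m hm])
  have hnot : #(I.filter fun i => ¬ i ≤ m) = #I / 2 := by omega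
  have hhalf : (2 * (#I / 2 : ℕ) : ℝ) ≤ #I ∧ (#I : ℝ) ≤ 2 * (#I / 2 : ℕ) + 1 := by
    constructor <;> norm_cast <;> omega
  intro hgood
  rcases hgood (x m) (hx m (hIs hm)) with hlt | hlt <;>
    rw [hcount, card_image_of_injOn hinj] at hlt <;>
    simp only [decide_eq_true_eq, decide_eq_false_iff_not] at hlt
  · rw [hcard, Nat.cast_sub (by omega)] at hlt
    linarith
  · rw [hnot] at hlt
    linarith

/-- A half graph of length `2k + 1` contains a threshold of length `k`: by pigeonhole `k + 1` of
its indices carry the same bit, and if that bit is `false` the pattern is reversed and shifted. -/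
theorem exists_isThreshold_comp_of_halfGraph {k : ℕ} {a : Fin (2 * k + 1) → α}
    {x : Fin (2 * k + 1) → β} {v : Fin (2 * k + 1) → Bool}
    (hav : ∀ i j, R (a i) (x j) = if i ≤ j then v i else !v j) :
    ∃ f g : Fin k → Fin (2 * k + 1), IsThreshold R univ (a ∘ f) (x ∘ g) := by
  obtain ⟨b, hb⟩ : ∃ b, k + 1 ≤ #(univ.filter (v · = b)) := by
    have := card_filter_add_card_filter_not (s := (univ : Finset (Fin (2 * k + 1)))) (v · = true)
    simp only [Bool.not_eq_true, card_univ, Fintype.card_fin] at this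
    by_cases h : k + 1 ≤ #(univ.filter (v · = true))
    exacts [⟨true, h⟩, ⟨false, by omega⟩]
  obtain ⟨t, hts, htc⟩ := exists_subset_card_eq hb
  set e := t.orderEmbOfFin htc
  have hve : ∀ i, v (e i) = b := fun i => (mem_filter.mp (hts (t.orderEmbOfFin_mem htc i))).2
  have hpat : ∀ i j, R (a (e i)) (x (e j)) = if i ≤ j then b else !b := by
    intro i j
    simp [hav, e.le_iff_le, hve]
  cases b
  · exact ⟨e ∘ Fin.succ ∘ Fin.rev, e ∘ Fin.castSucc ∘ Fin.rev, fun i _ j _ => by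
    simp [hpat, ← decide_not]⟩
  · exact ⟨e ∘ Fin.castSucc, e ∘ Fin.castSucc, fun i _ j _ => by simp [hpat]⟩

theorem HasShatteredTree.exists_isThreshold (h : ∀ n, HasShatteredTree R C P n) (k : ℕ) :
    ∃ (a : Fin k → α) (x : Fin k → β), IsThreshold R univ a x ∧ (∀ i, C (a i)) ∧ ∀ j, P (x j) := by
  obtain ⟨a, x, v, ha, hx, hav⟩ := exists_halfGraph (2 * k + 1) (h _)
  obtain ⟨f, g, hfg⟩ := exists_isThreshold_comp_of_halfGraph hav
  exact ⟨a ∘ f, x ∘ g, hfg, fun i => ha _, fun j => hx _⟩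

theorem forall_hasShatteredTree_flip (h : ∀ n, HasShatteredTree R C P n) (n : ℕ) :
    HasShatteredTree (fun b a => R a b) P C n := by
  obtain ⟨a, x, hax, ha, hx⟩ := HasShatteredTree.exists_isThreshold h (2 ^ n)
  exact .of_isThreshold hax.flip (fun i _ => hx _) (fun j _ => ha _) (by simp)

theorem exists_forall_not_isEpsGood [DecidableEq α] {ε c : ℝ} (h : ∀ n, HasShatteredTree R C P n)
    (hε : ε < 1 / 2) (hc : 0 < c) :
    ∃ A : Finset α, A.Nonempty ∧ (∀ a ∈ A, C a) ∧ ∀ B ⊆ A, c * #A ≤ #B → ¬ IsEpsGood R P ε B := by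
  obtain ⟨k, hk⟩ := exists_nat_ge (1 / (c * (1 - 2 * ε)))
  have hck : 1 ≤ (1 - 2 * ε) * (c * k) := by
    rw [div_le_iff₀ (by nlinarith)] at hk
    linarith
  have hk0 : 0 < k := by
    by_contra! hk0
    norm_num [Nat.le_zero.mp hk0] at hck
  obtain ⟨a, x, hax, ha, hx⟩ := HasShatteredTree.exists_isThreshold h k
  have hA : #(univ.image a) = k := by
    rw [card_image_of_injOn (hax.injOn), card_univ, Fintype.card_fin]
  refine ⟨univ.image a, ⟨a ⟨0, hk0⟩, mem_image_of_mem _ (mem_univ _)⟩, by simp [ha],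
    fun B hB hBc => hax.not_isEpsGood (fun j _ => hx j) hB ?_⟩
  rw [hA] at hBc
  nlinarith

end Thresholds

section HypothesisClasses

variable {X : Type*} {H : Set (X → Bool)}

theorem shatters_iff_hasShatteredTree {n : ℕ} :
    Shatters H n ↔ HasShatteredTree (fun h x => h x) (· ∈ H) (fun _ => True) n :=
  ⟨fun ⟨t, ht⟩ => ⟨t, fun _ _ => trivial, ht⟩, fun ⟨t, _, ht⟩ => ⟨t, ht⟩⟩

theorem ldim_eq_top_iff : Ldim H = ⊤ ↔ ∀ n, Shatters H n := by
  refine ⟨fun htop N => ?_, fun h =>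
    ENat.WithBot.eq_top_iff_forall_ge.mpr fun n => le_sSup ⟨n, h n, rfl⟩⟩
  by_contra hN
  have hle : Ldim H ≤ ((N : ℕ∞) : WithBot ℕ∞) := by
    refine sSup_le fun _ ⟨n, hn, hd⟩ => hd ▸ WithBot.coe_le_coe.mpr (Nat.cast_le.mpr ?_)
    by_contra! hlt
    exact hN (shatters_iff_hasShatteredTree.mpr
      ((shatters_iff_hasShatteredTree.mp hn).of_le hlt.le))
  rw [htop, top_le_iff] at hle
  exact ENat.natCast_ne_top N (WithBot.coe_eq_top.mp hle)

theorem exists_epsGoodH_subset_of_ldim_ne_top (hH : Ldim H ≠ ⊤) {ε : ℝ} (hε0 : 0 < ε)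
    (hε : ε < 1 / 2) : ∃ c : ℝ, 0 < c ∧ ∀ A : Finset (X → Bool), ↑A ⊆ H → A.Nonempty →
      ∃ B ⊆ A, c * A.card ≤ (B.card : ℝ) ∧ EpsGoodH ε B := by
  obtain ⟨N, hN⟩ := not_forall.mp (mt ldim_eq_top_iff.mpr hH)
  refine ⟨ε ^ N, by positivity, fun A hAH hA => ?_⟩
  obtain ⟨B, hBA, hBc, hB⟩ := exists_isEpsGood_subset hε0 (by linarith) N A hA fun hA' =>
    hN (shatters_iff_hasShatteredTree.mpr (hA'.mono (fun _ hh => hAH hh) fun _ => id))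
  exact ⟨B, hBA, hBc, fun x => hB x trivial⟩

theorem exists_epsGoodX_subset_of_ldim_ne_top (hH : Ldim H ≠ ⊤) {ε : ℝ} (hε0 : 0 < ε)
    (hε : ε < 1 / 2) : ∃ c : ℝ, 0 < c ∧ ∀ A : Finset X, A.Nonempty →
      ∃ B ⊆ A, c * A.card ≤ (B.card : ℝ) ∧ EpsGoodX H ε B := by
  obtain ⟨N, hN⟩ := not_forall.mp (mt ldim_eq_top_iff.mpr hH)
  obtain ⟨D, hD⟩ : ∃ D, ¬ HasShatteredTree (fun x h => h x) (fun _ : X => True) (· ∈ H) D := by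
    by_contra! h
    exact hN (shatters_iff_hasShatteredTree.mpr (forall_hasShatteredTree_flip h N))
  exact ⟨ε ^ D, by positivity, fun A hA => exists_isEpsGood_subset hε0 (by linarith) D A hA
    fun hA' => hD (hA'.mono (fun _ _ => trivial) fun _ => id)⟩

theorem ldim_ne_top_of_exists_epsGoodH {ε c : ℝ} (hε : ε < 1 / 2) (hc : 0 < c)
    (hgood : ∀ A : Finset (X → Bool), ↑A ⊆ H → A.Nonempty →
      ∃ B ⊆ A, c * A.card ≤ (B.card : ℝ) ∧ EpsGoodH ε B) : Ldim H ≠ ⊤ := by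
  intro htop
  obtain ⟨A, hA, hAH, hbad⟩ := exists_forall_not_isEpsGood
    (fun n => shatters_iff_hasShatteredTree.mp (ldim_eq_top_iff.mp htop n)) hε hc
  obtain ⟨B, hBA, hBc, hB⟩ := hgood A hAH hA
  exact hbad B hBA hBc fun x _ => hB x

theorem ldim_ne_top_of_exists_epsGoodX {ε c : ℝ} (hε : ε < 1 / 2) (hc : 0 < c)
    (hgood : ∀ A : Finset X, A.Nonempty → ∃ B ⊆ A, c * A.card ≤ (B.card : ℝ) ∧ EpsGoodX H ε B) :
    Ldim H ≠ ⊤ := by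
  intro htop
  obtain ⟨A, hA, -, hbad⟩ := exists_forall_not_isEpsGood (forall_hasShatteredTree_flip
    fun n => shatters_iff_hasShatteredTree.mp (ldim_eq_top_iff.mp htop n)) hε hc
  obtain ⟨B, hBA, hBc, hB⟩ := hgood A hA
  exact hbad B hBA hBc hB

end HypothesisClasses
/-- existence of large ε-good subsets (on either side) characterizes
Littlestone classes. -/
theorem stmt_0 {X : Type*} (H : Set (X → Bool)) :
    List.TFAE [
      -- (1) for every ε there is c = c(ε) > 0, every finite nonempty A ⊆ H has an ε-good
      -- subset of size ≥ c|A|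
      (∀ ε : ℝ, 0 < ε → ε < 1/2 → ∃ c : ℝ, 0 < c ∧
        ∀ A : Finset (X → Bool), ↑A ⊆ H → A.Nonempty →
          ∃ B ⊆ A, c * A.card ≤ (B.card : ℝ) ∧ EpsGoodH ε B),
      -- (2) for some ε and some c > 0
      (∃ ε : ℝ, 0 < ε ∧ ε < 1/2 ∧ ∃ c : ℝ, 0 < c ∧
        ∀ A : Finset (X → Bool), ↑A ⊆ H → A.Nonempty →
          ∃ B ⊆ A, c * A.card ≤ (B.card : ℝ) ∧ EpsGoodH ε B),
      -- (3) H is a Littlestone class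
      Ldim H ≠ ⊤,
      -- (4) for every ε there is c = c(ε) > 0, every finite nonempty A ⊆ X has an ε-good
      -- subset of size ≥ c|A|
      (∀ ε : ℝ, 0 < ε → ε < 1/2 → ∃ c : ℝ, 0 < c ∧
        ∀ A : Finset X, A.Nonempty →
          ∃ B ⊆ A, c * A.card ≤ (B.card : ℝ) ∧ EpsGoodX H ε B),
      -- (5) for some ε and some c > 0
      (∃ ε : ℝ, 0 < ε ∧ ε < 1/2 ∧ ∃ c : ℝ, 0 < c ∧
        ∀ A : Finset X, A.Nonempty →
          ∃ B ⊆ A, c * A.card ≤ (B.card : ℝ) ∧ EpsGoodX H ε B)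
    ] := by
  tfae_have 1 → 2 := fun h => ⟨1 / 4, by norm_num, by norm_num, h _ (by norm_num) (by norm_num)⟩
  tfae_have 2 → 3 := fun ⟨_, _, hε, _, hc, h⟩ => ldim_ne_top_of_exists_epsGoodH hε hc h
  tfae_have 3 → 1 := fun h _ => exists_epsGoodH_subset_of_ldim_ne_top h
  tfae_have 4 → 5 := fun h => ⟨1 / 4, by norm_num, by norm_num, h _ (by norm_num) (by norm_num)⟩
  tfae_have 5 → 3 := fun ⟨_, _, hε, _, hc, h⟩ => ldim_ne_top_of_exists_epsGoodX hε hc h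
  tfae_have 3 → 4 := fun h _ => exists_epsGoodX_subset_of_ldim_ne_top h
  tfae_finish
end

section
/- Suppose (X, H) is a hypothesis class with Littlestone dimension Ldim(H) = d < ∞ and 0 < ε < 1/2. Then for every finite nonempty A ⊆ H there exists B ⊆ A with |B| ≥ ε^d·|A| such that B is ε-good. -/
open scoped Classical

/-- If both restricted classes shatter a tree of depth `n`, the whole class
shatters a tree of depth `n+1` rooted at `x`. -/
lemma shatters_step {X : Type*} (H : Set (X → Bool)) (x : X) (n : ℕ)
    (h0 : Shatters {h ∈ H | h x = false} n) (h1 : Shatters {h ∈ H | h x = true} n) :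
    Shatters H (n+1) := by
  obtain ⟨t0, ht0⟩ := h0
  obtain ⟨t1, ht1⟩ := h1
  refine ⟨fun s => match s with | [] => x | (b :: s') => cond b (t1 s') (t0 s'), ?_⟩
  intro y hy
  match y with
  | [] => simp at hy
  | (b :: y') =>
    have hy' : y'.length = n := by simpa using hy
    cases b with
    | false =>
      obtain ⟨h, hh, hr⟩ := ht0 y' hy'
      refine ⟨h, hh.1, ?_⟩
      intro i
      match i with
      | ⟨0, _⟩ => simpa using hh.2
      | ⟨j+1, hj⟩ =>
        have := hr ⟨j, by simpa using hj⟩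
        simpa using this
    | true =>
      obtain ⟨h, hh, hr⟩ := ht1 y' hy'
      refine ⟨h, hh.1, ?_⟩
      intro i
      match i with
      | ⟨0, _⟩ => simpa using hh.2
      | ⟨j+1, hj⟩ =>
        have := hr ⟨j, by simpa using hj⟩
        simpa using this

/-- Main induction on `d`: if `H` does not shatter a tree of depth `d+1`, then
every finite nonempty `A ⊆ H` has an ε-good subset of size at least `ε^d |A|`. -/
lemma main_ind {X : Type*} (ε : ℝ) (hε0 : 0 < ε) (hε : ε < 1/2) :
    ∀ d : ℕ, ∀ H : Set (X → Bool), ¬ Shatters H (d+1) →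
      ∀ A : Finset (X → Bool), ↑A ⊆ H → A.Nonempty →
        ∃ B ⊆ A, ε ^ d * A.card ≤ (B.card : ℝ) ∧ EpsGoodH ε B := by
  intro d
  induction d with
  | zero =>
    intro H hns A hA hAne
    by_cases hg : EpsGoodH ε A
    · exact ⟨A, subset_rfl, by simp, hg⟩
    · exfalso
      apply hns
      rw [EpsGoodH] at hg
      push_neg at hg
      obtain ⟨x, hx1, hx0⟩ := hg
      have hcard : (0 : ℝ) < ε * A.card := by
        have : 0 < A.card := Finset.card_pos.mpr hAne
        positivity
      have h1 : (A.filter fun h => h x = true).Nonempty := by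
        rw [← Finset.card_pos]
        exact_mod_cast hcard.trans_le hx1
      have h0 : (A.filter fun h => h x = false).Nonempty := by
        rw [← Finset.card_pos]
        exact_mod_cast hcard.trans_le hx0
      refine ⟨fun _ => x, ?_⟩
      intro y hy
      match y with
      | [b] =>
        cases b with
        | false =>
          obtain ⟨h, hh⟩ := h0
          simp only [Finset.mem_filter] at hh
          exact ⟨h, hA hh.1, fun i => by simpa [Realizes] using hh.2⟩
        | true =>
          obtain ⟨h, hh⟩ := h1
          simp only [Finset.mem_filter] at hh
          exact ⟨h, hA hh.1, fun i => by simpa [Realizes] using hh.2⟩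
  | succ n ih =>
    intro H hns A hA hAne
    by_cases hg : EpsGoodH ε A
    · refine ⟨A, subset_rfl, ?_, hg⟩
      have h1 : ε ^ (n+1) ≤ 1 := pow_le_one₀ hε0.le (by linarith)
      nlinarith [Nat.cast_nonneg (α := ℝ) A.card]
    · rw [EpsGoodH] at hg
      push_neg at hg
      obtain ⟨x, hx1, hx0⟩ := hg
      have hcard : (0 : ℝ) < ε * A.card := by
        have : 0 < A.card := Finset.card_pos.mpr hAne
        positivity
      have key : ¬ Shatters {h ∈ H | h x = false} (n+1) ∨
                 ¬ Shatters {h ∈ H | h x = true} (n+1) := by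
        by_contra hc
        push_neg at hc
        exact hns (shatters_step H x (n+1) hc.1 hc.2)
      have main : ∀ b : Bool, ¬ Shatters {h ∈ H | h x = b} (n+1) →
          (ε * A.card ≤ ((A.filter fun h => h x = b).card : ℝ)) →
          ∃ B ⊆ A, ε ^ (n+1) * A.card ≤ (B.card : ℝ) ∧ EpsGoodH ε B := by
        intro b hnb hcb
        have hsub : ↑(A.filter fun h => h x = b) ⊆ {h ∈ H | h x = b} := by
          intro h hh
          simp only [Finset.coe_filter, Set.mem_setOf_eq] at hh
          exact ⟨hA hh.1, hh.2⟩
        have hne : (A.filter fun h => h x = b).Nonempty := by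
          rw [← Finset.card_pos]
          exact_mod_cast hcard.trans_le hcb
        obtain ⟨B, hBsub, hBcard, hBgood⟩ := ih _ hnb _ hsub hne
        refine ⟨B, hBsub.trans (Finset.filter_subset _ _), ?_, hBgood⟩
        have h2 : ε ^ n * (ε * A.card) ≤ ε ^ n * ((A.filter fun h => h x = b).card : ℝ) :=
          mul_le_mul_of_nonneg_left hcb (by positivity)
        calc ε ^ (n+1) * A.card = ε ^ n * (ε * A.card) := by ring
          _ ≤ ε ^ n * ((A.filter fun h => h x = b).card : ℝ) := h2
          _ ≤ (B.card : ℝ) := hBcard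
      rcases key with hk | hk
      · exact main false hk hx0
      · exact main true hk hx1

/-- if `Ldim(H) = d < ∞` and `0 < ε < 1/2`, every finite nonempty
`A ⊆ H` has an ε-good subset `B` with `|B| ≥ ε^d |A|`. -/
theorem stmt_1 {X : Type*} (H : Set (X → Bool)) (d : ℕ)
    (hd : Ldim H = ((d : ℕ∞) : WithBot ℕ∞))
    (ε : ℝ) (hε0 : 0 < ε) (hε : ε < 1/2) :
    ∀ A : Finset (X → Bool), ↑A ⊆ H → A.Nonempty →
      ∃ B ⊆ A, ε ^ d * A.card ≤ (B.card : ℝ) ∧ EpsGoodH ε B := by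
  have hns : ¬ Shatters H (d+1) := by
    intro hs
    have hmem : (((d+1 : ℕ) : ℕ∞) : WithBot ℕ∞) ∈
        {e : WithBot ℕ∞ | ∃ n : ℕ, Shatters H n ∧ e = ((n : ℕ∞) : WithBot ℕ∞)} :=
      ⟨d+1, hs, rfl⟩
    have := le_sSup hmem
    rw [← Ldim, hd] at this
    have : (d+1 : ℕ) ≤ d := by exact_mod_cast this
    omega
  exact main_ind ε hε0 hε d H hns
end

section
/- Let (X, H) be a hypothesis class with Littlestone dimension d < ∞. For every T ∈ ℕ there exists a family A of at most Σ_{i=0}^{d} C(T,i) adaptive experts over X such that: for every complete binary tree of depth T with internal nodes labeled by elements of X, every branch of the tree which is realized by some h ∈ H is also realized by some expert in A. -/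
open scoped Classical

/-- An adaptive expert `E : List X → Bool` realizes the branch `y` of the tree with
node labels `t`: at each step it is fed the labels seen so far (including the current
node) and must output the branch direction. -/
def ExpertRealizes {X : Type*} (t : List Bool → X) (E : List X → Bool) (y : List Bool) : Prop :=
  ∀ i : Fin y.length, E ((List.range (i.1 + 1)).map fun j => t (y.take j)) = y.get i

section Aux
variable {X : Type*}

/-- The subclass of `G` of hypotheses taking value `b` at `x`. -/
def restr (G : Set (X → Bool)) (x : X) (b : Bool) : Set (X → Bool) :=
  {h | h ∈ G ∧ h x = b}

lemma restr_subset (G : Set (X → Bool)) (x : X) (b : Bool) : restr G x b ⊆ G :=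
  fun _ h => h.1

lemma shatters_mono {G G' : Set (X → Bool)} (hGG : G ⊆ G') {n : ℕ}
    (h : Shatters G n) : Shatters G' n := by
  obtain ⟨t, ht⟩ := h
  exact ⟨t, fun y hy => by obtain ⟨g, hg, hr⟩ := ht y hy; exact ⟨g, hGG hg, hr⟩⟩

lemma shatters_succ {G : Set (X → Bool)} {n : ℕ} (h : Shatters G (n + 1)) :
    Shatters G n := by
  obtain ⟨t, ht⟩ := h
  refine ⟨t, fun y hy => ?_⟩
  obtain ⟨g, hg, hr⟩ := ht (y ++ [false]) (by simp [hy])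
  refine ⟨g, hg, fun i => ?_⟩
  have hi' : (i : ℕ) < (y ++ [false]).length := by simp
  have := hr ⟨i, hi'⟩
  simpa [List.take_append_of_le_length (le_of_lt i.isLt),
    List.get_eq_getElem, List.getElem_append_left i.isLt] using this

lemma shatters_of_le {G : Set (X → Bool)} {m n : ℕ} (hmn : m ≤ n)
    (h : Shatters G n) : Shatters G m := by
  induction n with
  | zero => simpa [Nat.le_zero.mp hmn] using h
  | succ k ih =>
    rcases Nat.lt_or_ge m (k + 1) with h' | h'
    · exact ih (by omega) (shatters_succ h)
    · have : m = k + 1 := by omega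
      simpa [this] using h

lemma shatters_split {G : Set (X → Bool)} {n : ℕ} {x : X}
    (h0 : Shatters (restr G x false) n) (h1 : Shatters (restr G x true) n) :
    Shatters G (n + 1) := by
  obtain ⟨t0, ht0⟩ := h0
  obtain ⟨t1, ht1⟩ := h1
  refine ⟨fun s => match s with
    | [] => x
    | b :: s' => if b then t1 s' else t0 s', ?_⟩
  intro y hy
  match y, hy with
  | b :: y', hy =>
    have hy' : y'.length = n := by simpa using hy
    have key : ∀ (tb : List Bool → X), (∀ z : List Bool, z.length = n →
        ∃ h ∈ restr G x b, Realizes tb h z) →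
        (∀ s', (if b then t1 s' else t0 s') = tb s') →
        ∃ h ∈ G, Realizes (fun s => match s with
          | [] => x
          | c :: s' => if c then t1 s' else t0 s') h (b :: y') := by
      intro tb htb hif
      obtain ⟨g, hg, hr⟩ := htb y' hy'
      refine ⟨g, hg.1, fun i => ?_⟩
      rcases i with ⟨i, hi⟩
      match i with
      | 0 => simpa using hg.2
      | (j + 1) =>
        have hj : j < y'.length := by simpa using hi
        have := hr ⟨j, hj⟩
        simp only [List.take_succ_cons, List.get_eq_getElem, List.getElem_cons_succ]
        simpa [hif] using this
    cases b with
    | false => exact key t0 ht0 (by simp)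
    | true => exact key t1 ht1 (by simp)

/-- The (finite) Littlestone rank. -/
noncomputable def rk (G : Set (X → Bool)) : ℕ := sSup {n | Shatters G n}

lemma rk_le {G : Set (X → Bool)} {m : ℕ} (h : ¬ Shatters G (m + 1)) : rk G ≤ m :=
  csSup_le' fun n hn => by
    by_contra hc
    exact h (shatters_of_le (by omega) hn)

lemma bddAbove_of_not_shatters {G : Set (X → Bool)} {m : ℕ} (h : ¬ Shatters G (m + 1)) :
    BddAbove {n | Shatters G n} :=
  ⟨m, fun n hn => by by_contra hc; exact h (shatters_of_le (by omega) hn)⟩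

lemma le_rk {G : Set (X → Bool)} {n : ℕ} (hb : BddAbove {n | Shatters G n})
    (h : Shatters G n) : n ≤ rk G := le_csSup hb h

lemma rk_mono {G G' : Set (X → Bool)} (hGG : G ⊆ G')
    (hb : BddAbove {n | Shatters G' n}) : rk G ≤ rk G' :=
  csSup_le' fun n hn => le_rk hb (shatters_mono hGG hn)

lemma shatters_rk {G : Set (X → Bool)} (hne : Shatters G 0)
    (hb : BddAbove {n | Shatters G n}) : Shatters G (rk G) :=
  Nat.sSup_mem ⟨0, by exact hne⟩ hb

/-- SOA-style prediction. -/
noncomputable def prd (G : Set (X → Bool)) (x : X) : Bool :=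
  if Shatters (restr G x true) (rk G) then true else false

lemma rk_mistake {G : Set (X → Bool)} (hb : BddAbove {n | Shatters G n})
    {h : X → Bool} (hh : h ∈ G) {x : X} (hne : prd G x ≠ h x) :
    rk (restr G x (h x)) < rk G := by
  have hbr : BddAbove {n | Shatters (restr G x (h x)) n} :=
    hb.mono fun n hn => shatters_mono (restr_subset G x (h x)) hn
  have hne0 : Shatters (restr G x (h x)) 0 :=
    ⟨fun _ => x, fun y hy => ⟨h, ⟨hh, rfl⟩, fun i => absurd i.isLt (by simp [List.length_eq_zero_iff.mp hy])⟩⟩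
  have hnot : ¬ Shatters (restr G x (h x)) (rk G) := by
    cases hbb : h x with
    | true =>
      intro hc
      rw [hbb] at hne
      have hc' : Shatters (restr G x true) (rk G) := hbb ▸ hc
      simp [prd, hc'] at hne
    | false =>
      intro hc
      rw [hbb] at hne
      have h1 : Shatters (restr G x true) (rk G) := by
        by_contra hc1
        simp [prd, hc1] at hne
      have := shatters_split (hbb ▸ hc) h1
      have := le_rk hb this
      omega
  have hle : rk (restr G x (h x)) ≤ rk G := rk_mono (restr_subset G x (h x)) hb
  rcases lt_or_eq_of_le hle with h' | h'
  · exact h'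
  · exact absurd (h' ▸ shatters_rk hne0 hbr) hnot

/-- Bit output by the expert indexed by `S` at step `i`, with current class `G`
and current instance `x`. -/
noncomputable def bitS (S : Finset ℕ) (i : ℕ) (G : Set (X → Bool)) (x : X) : Bool :=
  if i ∈ S then !(prd G x) else prd G x

/-- The expert indexed by `S` (simulating SOA, flipping predictions on rounds in `S`),
fed the chronological list of instances, with the current instance last. -/
noncomputable def Esub (S : Finset ℕ) : ℕ → Set (X → Bool) → List X → Bool
  | _, _, [] => false
  | i, G, x :: xs =>
      if xs = [] then bitS S i G x
      else Esub S (i + 1) (restr G x (bitS S i G x)) xs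

end Aux

/-- dynamic Sauer–Shelah–Perles lemma. If `Ldim(H) = d < ∞` then for every
`T` there is a family of at most `Σ_{i≤d} C(T,i)` adaptive experts covering every branch
of every depth-`T` tree that is realized by some `h ∈ H`. -/
theorem stmt_4 {X : Type*} (H : Set (X → Bool)) (d : ℕ)
    (hd : Ldim H = ((d : ℕ∞) : WithBot ℕ∞)) (T : ℕ) :
    ∃ A : Finset (List X → Bool),
      A.card ≤ ∑ i ∈ Finset.range (d + 1), T.choose i ∧
      ∀ t : List Bool → X, ∀ y : List Bool, y.length = T →
        (∃ h ∈ H, Realizes t h y) → ∃ E ∈ A, ExpertRealizes t E y := by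
  -- Basic consequences of the Littlestone dimension hypothesis.
  have hnot : ¬ Shatters H (d + 1) := by
    intro hc
    have hle : (((d + 1 : ℕ) : ℕ∞) : WithBot ℕ∞) ≤ Ldim H :=
      le_sSup ⟨d + 1, hc, rfl⟩
    rw [hd] at hle
    have : (d + 1 : ℕ) ≤ d := by exact_mod_cast hle
    omega
  have hbH : BddAbove {n | Shatters H n} := bddAbove_of_not_shatters hnot
  -- The family of experts.
  refine ⟨((Finset.range (d + 1)).biUnion fun i => (Finset.range T).powersetCard i).image
    (fun S => Esub S 0 H), ?_, ?_⟩
  · calc _ ≤ ((Finset.range (d + 1)).biUnion fun i => (Finset.range T).powersetCard i).card :=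
        Finset.card_image_le
      _ ≤ ∑ i ∈ Finset.range (d + 1), ((Finset.range T).powersetCard i).card :=
        Finset.card_biUnion_le
      _ = ∑ i ∈ Finset.range (d + 1), T.choose i := by
        simp [Finset.card_powersetCard]
  · rintro t y hy ⟨h, hhH, hr⟩
    -- nodes along the branch and their labels
    set xx : ℕ → X := fun i => t (y.take i) with hxx
    set yy : ℕ → Bool := fun i => y.getD i false with hyy
    -- version spaces along the branch
    set G : ℕ → Set (X → Bool) := fun i =>
      Nat.rec H (fun j Gj => restr Gj (xx j) (yy j)) i with hG
    have hG0 : G 0 = H := rfl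
    have hGsucc : ∀ j, G (j + 1) = restr (G j) (xx j) (yy j) := fun j => rfl
    have hGsub : ∀ i, G i ⊆ H := by
      intro i
      induction i with
      | zero => exact subset_rfl
      | succ j ih => exact (restr_subset _ _ _).trans ih
    have hbG : ∀ i, BddAbove {n | Shatters (G i) n} := fun i =>
      hbH.mono fun n hn => shatters_mono (hGsub i) hn
    have hGnot : ∀ i, ¬ Shatters (G i) (d + 1) := fun i hc =>
      hnot (shatters_mono (hGsub i) hc)
    have hyval : ∀ i (hi : i < T), h (xx i) = yy i := by
      intro i hi
      have := hr ⟨i, by omega⟩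
      simpa [hxx, hyy, List.getD_eq_getElem, hy.symm ▸ hi, List.get_eq_getElem] using this
    have hhG : ∀ i, i ≤ T → h ∈ G i := by
      intro i
      induction i with
      | zero => exact fun _ => hhH
      | succ j ih =>
        intro hj
        rw [hGsucc]
        exact ⟨ih (by omega), hyval j (by omega)⟩
    -- mistake rounds of SOA along this branch
    set S : Finset ℕ := (Finset.range T).filter (fun i => prd (G i) (xx i) ≠ yy i) with hS
    have hSsub : S ⊆ Finset.range T := Finset.filter_subset _ _
    have key_b : ∀ i, i < T → bitS S i (G i) (xx i) = yy i := by
      intro i hi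
      by_cases hmem : i ∈ S
      · have : prd (G i) (xx i) ≠ yy i := (Finset.mem_filter.mp hmem).2
        simp only [bitS, if_pos hmem]
        revert this
        cases prd (G i) (xx i) <;> cases yy i <;> simp
      · have : ¬ (prd (G i) (xx i) ≠ yy i) := fun hc =>
          hmem (Finset.mem_filter.mpr ⟨Finset.mem_range.mpr hi, hc⟩)
        simp only [bitS, if_neg hmem]
        exact not_not.mp this
    -- mistake bound: |S| ≤ d
    have hcount : ∀ i, i ≤ T → (S.filter (fun j => j < i)).card + rk (G i) ≤ rk (G 0) := by
      intro i
      induction i with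
      | zero => simp
      | succ j ih =>
        intro hj
        have ihj := ih (by omega)
        have hsplit : S.filter (fun k => k < j + 1)
            = if j ∈ S then insert j (S.filter (fun k => k < j)) else S.filter (fun k => k < j) := by
          by_cases hjS : j ∈ S
          · rw [if_pos hjS]
            ext k
            simp only [Finset.mem_filter, Finset.mem_insert]
            constructor
            · rintro ⟨hk, hk'⟩
              rcases Nat.lt_or_ge k j with h' | h'
              · exact Or.inr ⟨hk, h'⟩
              · exact Or.inl (by omega)
            · rintro (rfl | ⟨hk, hk'⟩)
              · exact ⟨hjS, by omega⟩
              · exact ⟨hk, by omega⟩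
          · rw [if_neg hjS]
            ext k
            simp only [Finset.mem_filter]
            constructor
            · rintro ⟨hk, hk'⟩
              refine ⟨hk, ?_⟩
              rcases Nat.lt_or_ge k j with h' | h'
              · exact h'
              · have hkj : k = j := by omega
                exact absurd (hkj ▸ hk) hjS
            · rintro ⟨hk, hk'⟩
              exact ⟨hk, by omega⟩
        by_cases hjS : j ∈ S
        · have hpred : prd (G j) (xx j) ≠ yy j := (Finset.mem_filter.mp hjS).2
          have hmem : h ∈ G j := hhG j (by omega)
          have hne : prd (G j) (xx j) ≠ h (xx j) := by
            rw [hyval j (by omega)]; exact hpred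
          have hlt : rk (restr (G j) (xx j) (h (xx j))) < rk (G j) :=
            rk_mistake (hbG j) hmem hne
          have heq : G (j + 1) = restr (G j) (xx j) (h (xx j)) := by
            rw [hGsucc, hyval j (by omega)]
          have hcard : (S.filter (fun k => k < j + 1)).card
              = (S.filter (fun k => k < j)).card + 1 := by
            rw [hsplit, if_pos hjS, Finset.card_insert_of_notMem (by simp)]
          rw [hcard, heq]
          omega
        · have hle : rk (G (j + 1)) ≤ rk (G j) := by
            rw [hGsucc]; exact rk_mono (restr_subset _ _ _) (hbG j)
          rw [hsplit, if_neg hjS]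
          omega
    have hScard : S.card ≤ d := by
      have h1 := hcount T le_rfl
      have h2 : S.filter (fun j => j < T) = S := by
        apply Finset.filter_true_of_mem
        intro k hk
        exact Finset.mem_range.mp (hSsub hk)
      rw [h2] at h1
      have h3 : rk (G 0) ≤ d := rk_le (hGnot 0)
      omega
    -- the run of the expert indexed by S follows the branch
    have hrun : ∀ m j, j + m < T →
        Esub S j (G j) ((List.range (m + 1)).map (fun k => xx (j + k))) = yy (j + m) := by
      intro m
      induction m with
      | zero =>
        intro j hj
        have h1 : (List.range (0 + 1)).map (fun k => xx (j + k)) = [xx j] := by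
          simp [List.range_succ]
        rw [h1]
        rw [show Esub S j (G j) [xx j] = bitS S j (G j) (xx j) from by simp [Esub]]
        simpa using key_b j (by omega)
      | succ m ih =>
        intro j hj
        have hlist : (List.range (m + 1 + 1)).map (fun k => xx (j + k))
            = xx j :: (List.range (m + 1)).map (fun k => xx (j + 1 + k)) := by
          rw [List.range_succ_eq_map, List.map_cons, List.map_map]
          simp only [Nat.add_zero]
          congr 1
          apply List.map_congr_left
          intro k _
          simp only [Function.comp_apply]
          congr 1
          omega
        rw [hlist]
        have hne : (List.range (m + 1)).map (fun k => xx (j + 1 + k)) ≠ [] := by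
          simp [List.range_succ_eq_map]
        rw [show Esub S j (G j) (xx j :: (List.range (m + 1)).map (fun k => xx (j + 1 + k)))
            = Esub S (j + 1) (restr (G j) (xx j) (bitS S j (G j) (xx j)))
              ((List.range (m + 1)).map (fun k => xx (j + 1 + k))) from by
          simp [Esub, hne]]
        rw [key_b j (by omega), ← hGsucc]
        have := ih (j + 1) (by omega)
        rw [show j + (m + 1) = j + 1 + m by omega]
        exact this
    -- assemble
    refine ⟨Esub S 0 H, Finset.mem_image.mpr ⟨S, ?_, rfl⟩, ?_⟩
    · apply Finset.mem_biUnion.mpr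
      exact ⟨S.card, Finset.mem_range.mpr (by omega),
        Finset.mem_powersetCard.mpr ⟨hSsub, rfl⟩⟩
    · intro i
      have hiT : (i : ℕ) < T := by rw [← hy]; exact i.isLt
      have := hrun i 0 (by omega)
      rw [hG0] at this
      simp only [Nat.zero_add] at this
      have hlist : (List.range ((i : ℕ) + 1)).map (fun j => t (y.take j))
          = (List.range ((i : ℕ) + 1)).map (fun k => xx k) := rfl
      rw [hlist, this, hyy]
      simp [List.getD_eq_getElem, hy.symm ▸ hiT, List.get_eq_getElem]
end

section
/- Suppose (X, H) is a hypothesis class which does not have finite Littlestone dimension. Then for every d ∈ ℕ and every T ∈ ℕ with 2^T > Σ_{i=0}^{d} C(T,i), and for every family A of at most Σ_{i=0}^{d} C(T,i) adaptive experts over X, there is a complete binary tree of depth T with X-labeled internal nodes and some h ∈ H which realizes a branch of this tree that is not realized by any expert in A. -/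
open scoped Classical

namespace ExpertRealizes

variable {X : Type*} {t : List Bool → X} {E : List X → Bool}

theorem eq_of_length_eq {y y' : List Bool} (hlen : y.length = y'.length)
    (hy : ExpertRealizes t E y) (hy' : ExpertRealizes t E y') : y = y' := by
  -- The expert's input at step `k` only sees `y.take k`, so agreement propagates prefix by prefix.
  have htake : ∀ k ≤ y.length, y.take k = y'.take k := by
    intro k
    induction k with
    | zero => simp
    | succ k ih =>
      intro hk
      have hky : k < y.length := hk
      have hky' : k < y'.length := hlen ▸ hky
      have hprefix := ih hky.le
      have hinput : (List.range (k + 1)).map (fun j => t (y.take j))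
          = (List.range (k + 1)).map (fun j => t (y'.take j)) := by
        refine List.map_congr_left fun j hj => ?_
        have hjk : j ≤ k := Nat.lt_succ_iff.mp (List.mem_range.mp hj)
        have hsub : ∀ l : List Bool, (l.take k).take j = l.take j := by
          simp [List.take_take, hjk]
        rw [← hsub y, hprefix, hsub]
      have hbit : y[k] = y'[k] := by
        have := hy ⟨k, hky⟩
        rw [hinput, hy' ⟨k, hky'⟩] at this
        simpa using this.symm
      rw [List.take_succ_eq_append_getElem hky, List.take_succ_eq_append_getElem hky', hprefix,
        hbit]
  have := htake y.length le_rfl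
  rwa [List.take_length, hlen, List.take_length] at this

end ExpertRealizes

section Shatters

variable {X : Type*} {H : Set (X → Bool)}

theorem Shatters.mono {m n : ℕ} (hmn : m ≤ n) (h : Shatters H n) : Shatters H m := by
  obtain ⟨t, ht⟩ := h
  refine ⟨t, fun y hy => ?_⟩
  -- pad the branch with `false` to depth `n`; a hypothesis realizing it realizes `y` too
  obtain ⟨h, hH, hr⟩ := ht (y ++ List.replicate (n - m) false) (by simp [hy, hmn])
  refine ⟨h, hH, fun i => ?_⟩
  have hi : i.1 < (y ++ List.replicate (n - m) false).length := by
    simp only [List.length_append, List.length_replicate]; omega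
  simpa [List.take_append_of_le_length i.2.le, List.getElem_append_left i.2] using hr ⟨i, hi⟩

theorem Ldim_le_of_not_shatters {n : ℕ} (h : ¬ Shatters H n) :
    Ldim H ≤ ((n : ℕ∞) : WithBot ℕ∞) := by
  refine sSup_le ?_
  rintro _ ⟨m, hm, rfl⟩
  have hmn : m ≤ n := by
    by_contra hnm
    exact h (hm.mono (not_le.mp hnm).le)
  exact_mod_cast hmn

theorem shatters_of_Ldim_eq_top (hinf : Ldim H = ⊤) (n : ℕ) : Shatters H n := by
  by_contra h
  have := Ldim_le_of_not_shatters h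
  rw [hinf] at this
  exact ENat.natCast_ne_top n (WithBot.coe_injective (top_le_iff.mp this))

end Shatters

theorem exists_branch_forall_not_expertRealizes {X : Type*} (t : List Bool → X)
    (A : Finset (List X → Bool)) {n : ℕ} (hA : A.card < 2 ^ n) :
    ∃ y : List Bool, y.length = n ∧ ∀ E ∈ A, ¬ ExpertRealizes t E y := by
  by_contra! hcover
  choose F hFA hFE using fun v : Fin n → Bool => hcover (List.ofFn v) List.length_ofFn
  have hF : Function.Injective F := fun v w hvw =>
    List.ofFn_injective <| (hFE v).eq_of_length_eq (by simp) (hvw ▸ hFE w)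
  have hcard : (Finset.univ : Finset (Fin n → Bool)).card ≤ A.card :=
    Finset.card_le_card_of_injOn F (fun v _ => hFA v) hF.injOn
  simp only [Finset.card_univ, Fintype.card_fun, Fintype.card_bool, Fintype.card_fin] at hcard
  omega

/-- if `H` does not have finite Littlestone dimension, then no family of
`≤ Σ_{i≤d} C(T,i)` adaptive experts (with `2^T > Σ_{i≤d} C(T,i)`) covers all branches
realized by `H` in all depth-`T` trees. -/
theorem stmt_5 {X : Type*} (H : Set (X → Bool)) (hinf : Ldim H = ⊤)
    (d T : ℕ) (hT : (∑ i ∈ Finset.range (d + 1), T.choose i) < 2 ^ T)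
    (A : Finset (List X → Bool))
    (hA : A.card ≤ ∑ i ∈ Finset.range (d + 1), T.choose i) :
    ∃ t : List Bool → X, ∃ h ∈ H, ∃ y : List Bool, y.length = T ∧
      Realizes t h y ∧ ∀ E ∈ A, ¬ ExpertRealizes t E y := by
  obtain ⟨t, hshatter⟩ := shatters_of_Ldim_eq_top hinf T
  obtain ⟨y, hy, hmiss⟩ := exists_branch_forall_not_expertRealizes t A (hA.trans_lt hT)
  obtain ⟨h, hH, hrealize⟩ := hshatter y hy
  exact ⟨t, h, hH, y, hy, hrealize, hmiss⟩
end

section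
/- Let (X, H) be a hypothesis class with X countable, let 0 < ε < 1/2, and let there be given an ε-good complete binary tree of depth T that is shattered by H. Then for every online learner A there exist probability mass functions D_1,...,D_T on X and labels y_1,...,y_T ∈ {0,1} such that, when the examples x_1,...,x_T are sampled independently with x_t ∼ D_t and labeled by y_t: (i) the expected number of mistakes of A, namely Σ_{t=1}^{T} Pr[ A((x_1,y_1),...,(x_{t-1},y_{t-1}), x_t) ≠ y_t ] (probability over the samples and over A's randomized predictions), is at least T/2; and (ii) there exists h ∈ H whose expected number of mistakes, Σ_{t=1}^{T} Pr_{x_t ∼ D_t}[ h(x_t) ≠ y_t ], is at most ε·T. Consequently the expected regret of A with respect to H on this random sequence is at least (1/2 − ε)·T. -/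
open scoped Classical

/-- The mass that distribution `D` assigns to `{x : h x = 1}`. -/
noncomputable def hmass {X : Type*} (D : X → ℝ) (h : X → Bool) : ℝ :=
  ∑' x, if h x = true then D x else 0

/-- `D` is a probability mass function on `X`. -/
def IsPMF {X : Type*} (D : X → ℝ) : Prop :=
  (∀ x, 0 ≤ D x) ∧ (∑' x, D x) = 1

/-- `D` is an ε-good probability mass function w.r.t. `H`. -/
def GoodPMF {X : Type*} (H : Set (X → Bool)) (ε : ℝ) (D : X → ℝ) : Prop :=
  IsPMF D ∧ ∀ h ∈ H, hmass D h ≤ ε ∨ 1 - ε ≤ hmass D h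

/-- `h` realizes the branch `y` of the distribution-labeled tree `𝒯`: at each node it
goes in direction 1 iff the node's distribution gives `{x : h x = 1}` mass `≥ 1 - ε`. -/
def RealizesDist {X : Type*} (ε : ℝ) (𝒯 : List Bool → X → ℝ) (h : X → Bool)
    (y : List Bool) : Prop :=
  ∀ i : Fin y.length,
    (y.get i = true → 1 - ε ≤ hmass (𝒯 (y.take i)) h) ∧
    (y.get i = false → hmass (𝒯 (y.take i)) h ≤ ε)

/-- `𝒯` is a complete ε-good binary tree of depth `T` shattered by `H`. -/
def GoodTree {X : Type*} (H : Set (X → Bool)) (ε : ℝ) (T : ℕ)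
    (𝒯 : List Bool → X → ℝ) : Prop :=
  (∀ s : List Bool, s.length < T → GoodPMF H ε (𝒯 s)) ∧
  (∀ y : List Bool, y.length = T → ∃ h ∈ H, RealizesDist ε 𝒯 h y)

/-- The history `(x_1,y_1),…,(x_{t-1},y_{t-1})` presented to the learner before round `t`. -/
def histList {X : Type*} {T : ℕ} (xs : Fin T → X) (y : Fin T → Bool) (t : Fin T) :
    List (X × Bool) :=
  List.ofFn fun j : Fin t.1 =>
    (xs ⟨j.1, Nat.lt_of_lt_of_le j.2 (Nat.le_of_lt t.2)⟩,
     y ⟨j.1, Nat.lt_of_lt_of_le j.2 (Nat.le_of_lt t.2)⟩)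

/-!
The adversary fixes the labels one round at a time. Once `y₁, …, y_{t-1}` are chosen, the
distributions `Dᵢ = 𝒯 (y₁ … y_{i-1})` of the first `t` rounds are determined, hence so is the
probability `p` that the learner predicts `1` at round `t`; labelling round `t` by `1` or `0`
costs the learner `1 - p` or `p` expected mistakes, and the adversary takes the larger, which is
at least `1/2`. Later rounds do not change this, because the marginal of a product distribution
on its first `t` coordinates is the product of the first `t` factors. A hypothesis realizing the
branch `y₁ … y_T` errs at round `t` with probability at most `ε`, as `D_t` is `ε`-good and the
branch leaves that node in direction `y_t`.
-/

open scoped ENNReal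

theorem ENNReal.inv_two_le_of_add_eq_one {a b : ℝ≥0∞} (hab : a + b = 1) (hba : b ≤ a) :
    2⁻¹ ≤ a := by
  by_contra! ha
  have := ENNReal.add_lt_add ha (hba.trans_lt ha)
  rw [hab, ENNReal.inv_two_add_inv_two] at this
  exact this.false

section

variable {X : Type*}

noncomputable def piExpect {n : ℕ} (q : Fin n → X → ℝ≥0∞) (g : (Fin n → X) → ℝ≥0∞) : ℝ≥0∞ :=
  ∑' xs, (∏ i, q i (xs i)) * g xs

theorem piExpect_comp_init {n : ℕ} (q : Fin (n + 1) → X → ℝ≥0∞)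
    (hq : ∑' x, q (Fin.last n) x = 1) (g : (Fin n → X) → ℝ≥0∞) :
    piExpect q (fun xs => g (Fin.init xs)) = piExpect (fun i => q i.castSucc) g := by
  rw [piExpect, ← (Fin.snocEquiv fun _ => X).tsum_eq, ENNReal.tsum_prod', ENNReal.tsum_comm]
  refine tsum_congr fun zs => ?_
  simp only [Fin.snocEquiv, Equiv.coe_fn_mk, Fin.prod_univ_castSucc, Fin.snoc_castSucc,
    Fin.snoc_last, Fin.init_snoc]
  rw [← mul_one ((∏ i, q i.castSucc (zs i)) * g zs), ← hq, ← ENNReal.tsum_mul_left]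
  exact tsum_congr fun x => by ring

theorem piExpect_comp_take {n : ℕ} (q : Fin n → X → ℝ≥0∞) (hq : ∀ i, ∑' x, q i x = 1)
    {k : ℕ} (hk : k ≤ n) (g : (Fin k → X) → ℝ≥0∞) :
    piExpect q (fun xs => g (Fin.take k hk xs)) = piExpect (Fin.take k hk q) g := by
  induction n with
  | zero => obtain rfl := Nat.le_zero.mp hk; rfl
  | succ n ih =>
    rcases hk.eq_or_lt with rfl | hlt
    · rfl
    · have hk' : k ≤ n := Nat.lt_succ_iff.mp hlt
      exact (piExpect_comp_init q (hq _) fun zs => g (Fin.take k hk' zs)).trans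
        (ih _ (fun i => hq _) hk')

theorem piExpect_one {n : ℕ} (q : Fin n → X → ℝ≥0∞) (hq : ∀ i, ∑' x, q i x = 1) :
    piExpect q (fun _ => 1) = 1 := by
  rw [piExpect_comp_take q hq (Nat.zero_le n) fun _ => 1]
  simp [piExpect]

theorem piExpect_finsetSum {n : ℕ} {ι : Type*} (s : Finset ι) (q : Fin n → X → ℝ≥0∞)
    (g : ι → (Fin n → X) → ℝ≥0∞) :
    piExpect q (fun xs => ∑ t ∈ s, g t xs) = ∑ t ∈ s, piExpect q (g t) := by
  simp only [piExpect, Finset.mul_sum]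
  exact Summable.tsum_finsetSum fun _ _ => ENNReal.summable

/-- No summability hypothesis is needed: if the real series diverges, its `tsum` is `0`, and so is
the `toReal` of the (then infinite) `ℝ≥0∞`-valued sum. -/
theorem tsum_prod_mul_eq_toReal_piExpect {n : ℕ} (p : Fin n → X → ℝ) (hp : ∀ i x, 0 ≤ p i x)
    (g : (Fin n → X) → ℝ) (hg : ∀ xs, 0 ≤ g xs) :
    ∑' xs, (∏ i, p i (xs i)) * g xs =
      (piExpect (fun i x => ENNReal.ofReal (p i x)) fun xs => ENNReal.ofReal (g xs)).toReal := by
  rw [piExpect, ENNReal.tsum_toReal_eq fun xs => ?_]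
  · refine tsum_congr fun xs => ?_
    rw [← ENNReal.ofReal_prod_of_nonneg fun i _ => hp i (xs i), ← ENNReal.ofReal_mul
      (Finset.prod_nonneg fun i _ => hp i (xs i)), ENNReal.toReal_ofReal
      (mul_nonneg (Finset.prod_nonneg fun i _ => hp i (xs i)) (hg xs))]
  · exact ENNReal.mul_ne_top (ENNReal.prod_ne_top fun _ _ => ENNReal.ofReal_ne_top)
      ENNReal.ofReal_ne_top

theorem IsPMF.summable {D : X → ℝ} (hD : IsPMF D) : Summable D := by
  by_contra h
  simpa [tsum_eq_zero_of_not_summable h] using hD.2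

theorem IsPMF.tsum_ofReal {D : X → ℝ} (hD : IsPMF D) :
    ∑' x, ENNReal.ofReal (D x) = 1 := by
  rw [← ENNReal.ofReal_tsum_of_nonneg hD.1 hD.summable, hD.2, ENNReal.ofReal_one]

def mistake (p : ℝ) (b : Bool) : ℝ :=
  if b = true then 1 - p else p

theorem mistake_nonneg {p : ℝ} (hp : 0 ≤ p ∧ p ≤ 1) (b : Bool) : 0 ≤ mistake p b := by
  cases b <;> simp [mistake] <;> linarith

theorem mistake_true_add_false (p : ℝ) : mistake p true + mistake p false = 1 := by
  simp [mistake]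

noncomputable def roundMistakeProb {n : ℕ} (q : Fin (n + 1) → X → ℝ≥0∞)
    (A : List (X × Bool) → X → ℝ) (lab : Fin n → Bool) (b : Bool) : ℝ≥0∞ :=
  piExpect q fun xs =>
    ENNReal.ofReal (mistake (A (List.ofFn fun j => (xs j.castSucc, lab j)) (xs (Fin.last n))) b)

theorem roundMistakeProb_true_add_false {n : ℕ} {q : Fin (n + 1) → X → ℝ≥0∞}
    (hq : ∀ i, ∑' x, q i x = 1) {A : List (X × Bool) → X → ℝ}
    (hA : ∀ hist x, 0 ≤ A hist x ∧ A hist x ≤ 1) (lab : Fin n → Bool) :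
    roundMistakeProb q A lab true + roundMistakeProb q A lab false = 1 := by
  rw [roundMistakeProb, roundMistakeProb, piExpect, piExpect, ← ENNReal.tsum_add,
    ← piExpect_one q hq]
  refine tsum_congr fun xs => ?_
  rw [← mul_add, ← ENNReal.ofReal_add (mistake_nonneg (hA _ _) _) (mistake_nonneg (hA _ _) _),
    mistake_true_add_false, ENNReal.ofReal_one]

theorem roundMistakeProb_le_one {n : ℕ} {q : Fin (n + 1) → X → ℝ≥0∞}
    (hq : ∀ i, ∑' x, q i x = 1) {A : List (X × Bool) → X → ℝ}
    (hA : ∀ hist x, 0 ≤ A hist x ∧ A hist x ≤ 1) (lab : Fin n → Bool) (b : Bool) :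
    roundMistakeProb q A lab b ≤ 1 := by
  have h := roundMistakeProb_true_add_false hq hA lab
  cases b
  · exact le_add_self.trans_eq h
  · exact le_self_add.trans_eq h

noncomputable def nodeDists (𝒯 : List Bool → X → ℝ) {n : ℕ} (lab : Fin n → Bool) :
    Fin (n + 1) → X → ℝ≥0∞ :=
  fun i x => ENNReal.ofReal (𝒯 (List.ofFn (Fin.take i i.is_le lab)) x)

noncomputable def adversaryLabel (𝒯 : List Bool → X → ℝ) (A : List (X × Bool) → X → ℝ)
    {n : ℕ} (lab : Fin n → Bool) : Bool :=
  decide (roundMistakeProb (nodeDists 𝒯 lab) A lab false ≤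
    roundMistakeProb (nodeDists 𝒯 lab) A lab true)

theorem inv_two_le_roundMistakeProb_adversaryLabel {𝒯 : List Bool → X → ℝ}
    {A : List (X × Bool) → X → ℝ} {n : ℕ} {lab : Fin n → Bool}
    (h : roundMistakeProb (nodeDists 𝒯 lab) A lab true +
      roundMistakeProb (nodeDists 𝒯 lab) A lab false = 1) :
    2⁻¹ ≤ roundMistakeProb (nodeDists 𝒯 lab) A lab (adversaryLabel 𝒯 A lab) := by
  by_cases hle : roundMistakeProb (nodeDists 𝒯 lab) A lab false ≤
      roundMistakeProb (nodeDists 𝒯 lab) A lab true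
  · rw [adversaryLabel, decide_eq_true hle]
    exact ENNReal.inv_two_le_of_add_eq_one h hle
  · rw [adversaryLabel, decide_eq_false hle]
    exact ENNReal.inv_two_le_of_add_eq_one ((add_comm _ _).trans h) (not_le.mp hle).le

noncomputable def adversary (𝒯 : List Bool → X → ℝ) (A : List (X × Bool) → X → ℝ) : ℕ → Bool
  | n => adversaryLabel 𝒯 A fun j : Fin n => adversary 𝒯 A j

theorem piExpect_mistake_eq_roundMistakeProb (𝒯 : List Bool → X → ℝ)
    (A : List (X × Bool) → X → ℝ) (y : ℕ → Bool) {T : ℕ}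
    (hq : ∀ i : Fin T, ∑' x, ENNReal.ofReal (𝒯 (List.ofFn fun j : Fin i => y j) x) = 1)
    (t : Fin T) :
    piExpect (fun i x => ENNReal.ofReal (𝒯 (List.ofFn fun j : Fin i => y j) x))
        (fun xs => ENNReal.ofReal (mistake (A (histList xs (fun s => y s) t) (xs t)) (y t))) =
      roundMistakeProb (nodeDists 𝒯 fun j : Fin t => y j) A (fun j : Fin t => y j) (y t) :=
  piExpect_comp_take _ hq t.2
    fun zs => ENNReal.ofReal (mistake (A (List.ofFn fun j => (zs j.castSucc, y j))
      (zs (Fin.last t))) (y t))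

theorem div_two_le_expectedMistakes_adversary (𝒯 : List Bool → X → ℝ)
    {A : List (X × Bool) → X → ℝ} (hA : ∀ hist x, 0 ≤ A hist x ∧ A hist x ≤ 1) {T : ℕ}
    (hP : ∀ n < T, IsPMF (𝒯 (List.ofFn fun j : Fin n => adversary 𝒯 A j))) :
    (T : ℝ) / 2 ≤ ∑' xs : Fin T → X,
      (∏ i : Fin T, 𝒯 (List.ofFn fun j : Fin i => adversary 𝒯 A j) (xs i)) *
        ∑ t : Fin T, mistake (A (histList xs (fun s => adversary 𝒯 A s) t) (xs t))
          (adversary 𝒯 A t) := by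
  set y := adversary 𝒯 A
  set E : Fin T → ℝ≥0∞ := fun t =>
    piExpect (fun i x => ENNReal.ofReal (𝒯 (List.ofFn fun j : Fin i => y j) x))
      (fun xs => ENNReal.ofReal (mistake (A (histList xs (fun s => y s) t) (xs t)) (y t)))
  have hround : ∀ t, 2⁻¹ ≤ E t ∧ E t ≤ 1 := by
    intro t
    have hnodes : ∀ i, ∑' x, nodeDists 𝒯 (fun j : Fin t => y j) i x = 1 := fun i =>
      (hP i (i.is_le.trans_lt t.2)).tsum_ofReal
    simp only [E]
    rw [piExpect_mistake_eq_roundMistakeProb 𝒯 A y (fun i => (hP i i.2).tsum_ofReal),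
      show y t = adversaryLabel 𝒯 A (fun j : Fin t => y j) from adversary.eq_1 ..]
    exact ⟨inv_two_le_roundMistakeProb_adversaryLabel
      (roundMistakeProb_true_add_false hnodes hA _), roundMistakeProb_le_one hnodes hA _ _⟩
  rw [tsum_prod_mul_eq_toReal_piExpect _ (fun i x => (hP i i.2).1 x) _
      fun xs => Finset.sum_nonneg fun t _ => mistake_nonneg (hA _ _) _]
  simp_rw [ENNReal.ofReal_sum_of_nonneg fun t _ => mistake_nonneg (hA _ _) _]
  rw [piExpect_finsetSum, ENNReal.toReal_sum fun t _ => ne_top_of_le_ne_top ENNReal.one_ne_top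
    (hround t).2]
  calc (T : ℝ) / 2 = ∑ _t : Fin T, (2⁻¹ : ℝ≥0∞).toReal := by simp [div_eq_mul_inv]
    _ ≤ ∑ t, (E t).toReal := Finset.sum_le_sum fun t _ =>
      ENNReal.toReal_mono (ne_top_of_le_ne_top ENNReal.one_ne_top (hround t).2) (hround t).1

theorem tsum_ite_eq_mistake_hmass {D : X → ℝ} (hD : IsPMF D) (h : X → Bool)
    (b : Bool) : (∑' x, if h x = b then 0 else D x) = mistake (hmass D h) b := by
  have hsplit : ∀ c : Bool, Summable fun x => if h x = c then 0 else D x := fun c =>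
    hD.summable.of_nonneg_of_le (fun x => by split_ifs <;> simp [hD.1 x])
      (fun x => by split_ifs <;> simp [hD.1 x])
  have hmass_eq : hmass D h = ∑' x, if h x = false then 0 else D x :=
    tsum_congr fun x => by cases h x <;> simp
  cases b
  · simp [mistake, hmass_eq]
  · rw [mistake, if_pos rfl, hmass_eq, ← hD.2, eq_sub_iff_add_eq,
      ← (hsplit true).tsum_add (hsplit false)]
    exact tsum_congr fun x => by cases h x <;> simp

theorem RealizesDist.mistake_hmass_le {ε : ℝ} {𝒯 : List Bool → X → ℝ}
    {h : X → Bool} {n : ℕ} {lab : Fin n → Bool} (hr : RealizesDist ε 𝒯 h (List.ofFn lab))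
    (t : Fin n) : mistake (hmass (𝒯 (List.ofFn (Fin.take t t.2.le lab))) h) (lab t) ≤ ε := by
  obtain ⟨htrue, hfalse⟩ := hr ⟨t, by simp⟩
  simp only [List.get_ofFn, ← Fin.ofFn_take_eq_take_ofFn t.2.le] at htrue hfalse
  cases hlab : lab t
  · simpa [mistake] using hfalse (by simpa using hlab)
  · rw [mistake, if_pos rfl]
    linarith [htrue (by simpa using hlab)]

end

theorem stmt_7_general {X : Type*} (H : Set (X → Bool))
    (ε : ℝ) (T : ℕ)
    (𝒯 : List Bool → X → ℝ) (htree : GoodTree H ε T 𝒯)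
    (A : List (X × Bool) → X → ℝ) (hA : ∀ hist x, 0 ≤ A hist x ∧ A hist x ≤ 1) :
    ∃ (D : Fin T → X → ℝ) (y : Fin T → Bool),
      (∀ t, IsPMF (D t)) ∧
      -- (i) expected number of mistakes of the learner is ≥ T/2
      ((T : ℝ) / 2 ≤
        ∑' xs : Fin T → X, (∏ i, D i (xs i)) *
          ∑ t : Fin T,
            (if y t = true then 1 - A (histList xs y t) (xs t)
             else A (histList xs y t) (xs t))) ∧
      -- (ii) some h ∈ H has expected number of mistakes ≤ ε·T
      (∃ h ∈ H, (∑ t : Fin T, ∑' x : X, if h x = y t then 0 else D t x) ≤ ε * T) := by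
  have hP : ∀ n < T, GoodPMF H ε (𝒯 (List.ofFn fun j : Fin n => adversary 𝒯 A j)) :=
    fun n hn => htree.1 _ (by simpa using hn)
  obtain ⟨h, hH, hreal⟩ := htree.2 (List.ofFn fun j : Fin T => adversary 𝒯 A j) (by simp)
  refine ⟨fun t => 𝒯 (List.ofFn fun j : Fin t => adversary 𝒯 A j), fun t => adversary 𝒯 A t,
    fun t => (hP t t.2).1, div_two_le_expectedMistakes_adversary 𝒯 hA fun n hn => (hP n hn).1,
    h, hH, ?_⟩
  calc _ = ∑ t : Fin T, mistake (hmass (𝒯 (List.ofFn fun j : Fin t => adversary 𝒯 A j)) h)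
        (adversary 𝒯 A t) :=
        Finset.sum_congr rfl fun t _ => tsum_ite_eq_mistake_hmass (hP t t.2).1 h _
    _ ≤ ∑ _t : Fin T, ε := Finset.sum_le_sum fun t _ => hreal.mistake_hmass_le t
    _ = ε * T := by simp [mul_comm]

/-- an ε-good complete binary tree of depth `T` shattered by `H` witnesses a
regret lower bound: for every (randomized) online learner `A` (where `A hist x` is the
probability of predicting `true`) there are distributions `D_1,…,D_T` and labels
`y_1,…,y_T` such that (i) the expected number of mistakes of `A` on the independent random
sequence `x_t ∼ D_t` labeled by `y_t` is at least `T/2`, and (ii) some `h ∈ H` has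
expected number of mistakes at most `ε·T`. -/
theorem stmt_7 {X : Type*} [Countable X] (H : Set (X → Bool))
    (ε : ℝ) (hε0 : 0 < ε) (hε : ε < 1/2) (T : ℕ)
    (𝒯 : List Bool → X → ℝ) (htree : GoodTree H ε T 𝒯)
    (A : List (X × Bool) → X → ℝ) (hA : ∀ hist x, 0 ≤ A hist x ∧ A hist x ≤ 1) :
    ∃ (D : Fin T → X → ℝ) (y : Fin T → Bool),
      (∀ t, IsPMF (D t)) ∧
      -- (i) expected number of mistakes of the learner is ≥ T/2
      ((T : ℝ) / 2 ≤
        ∑' xs : Fin T → X, (∏ i, D i (xs i)) *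
          ∑ t : Fin T,
            (if y t = true then 1 - A (histList xs y t) (xs t)
             else A (histList xs y t) (xs t))) ∧
      -- (ii) some h ∈ H has expected number of mistakes ≤ ε·T
      (∃ h ∈ H, (∑ t : Fin T, ∑' x : X, if h x = y t then 0 else D t x) ≤ ε * T) :=
  stmt_7_general H ε T 𝒯 htree A hA
end

section
/- Let (X, H) be a hypothesis class. The Threshold dimension of H is finite if and only if there exists ε* > 0 such that for all ε with 0 < ε < ε*, the ε-approximate Threshold dimension of H is finite. -/
/-!
An exact threshold configuration is an ε-approximate one for every `ε ≥ 0`, which gives one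
direction. Conversely, let `t` exceed the Threshold dimension and `ε < 1/(8t²)`. In an
ε-approximate configuration of size `m ≥ 2t` the off-diagonal violations are fewer than
`m²/(8t²)`, so double counting over the `2t`-subsets of indices yields one that contains no
violation. On it the configuration is an exact threshold of length `2t`, and taking the points
at odd and the hypotheses at even positions gives an exact threshold of size `t`.
-/

open scoped Classical

/-- `H` has a threshold (half-graph) configuration of size `k`. -/
def ThresholdAt {X : Type*} (H : Set (X → Bool)) (k : ℕ) : Prop :=
  ∃ (x : Fin k → X) (h : Fin k → (X → Bool)),
    (∀ j, h j ∈ H) ∧ ∀ i j, (h j (x i) = true ↔ i < j)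

/-- `H` has an ε-approximate threshold configuration of size `k`: distinct `x_1,…,x_k`
and distinct `h_1,…,h_k ∈ H` such that at most `ε·k²` of the pairs `(i,j)` violate the
half-graph relation `h_j(x_i) = [i < j]`. -/
def ApproxThresholdAt {X : Type*} (H : Set (X → Bool)) (ε : ℝ) (k : ℕ) : Prop :=
  ∃ (x : Fin k → X) (h : Fin k → (X → Bool)),
    Function.Injective x ∧ Function.Injective h ∧ (∀ j, h j ∈ H) ∧
    ((Finset.univ.filter fun p : Fin k × Fin k =>
        ¬ (h p.2 (x p.1) = true ↔ p.1 < p.2)).card : ℝ) ≤ ε * (k : ℝ) ^ 2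

open Finset

theorem exists_card_eq_forall_pair_not_mem {α : Type*} [Fintype α] [DecidableEq α] {n : ℕ}
    (hn : 2 ≤ n) (hnα : n ≤ Fintype.card α) (B : Finset (α × α)) (hB : ∀ p ∈ B, p.1 ≠ p.2)
    (hsparse : #B * n.choose 2 < (Fintype.card α).choose 2) :
    ∃ S : Finset α, #S = n ∧ ∀ a ∈ S, ∀ b ∈ S, (a, b) ∉ B := by
  by_contra! hdense
  set m := Fintype.card α
  have hcount : m.choose n ≤ #B * (m - 2).choose (n - 2) := by
    have := card_mul_le_card_mul (s := powersetCard n univ) (t := B) (m := 1)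
      (n := (m - 2).choose (n - 2)) (fun S p => {p.1, p.2} ⊆ S) ?_ ?_
    · simpa using this
    · intro S hS
      obtain ⟨a, ha, b, hb, hab⟩ := hdense S (mem_powersetCard.1 hS).2
      exact card_pos.2 ⟨(a, b), by simp [bipartiteAbove, hab, insert_subset_iff, ha, hb]⟩
    · intro p hp
      have hpair : #{p.1, p.2} = 2 := card_pair (hB p hp)
      rw [bipartiteBelow, card_filter_powersetCard_subset _ _ _ (subset_univ _) (hpair ▸ hn),
        hpair, card_univ]
  have hpos : 0 < (m - 2).choose (n - 2) := Nat.choose_pos (by omega)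
  have := calc
    m.choose 2 * (m - 2).choose (n - 2) = m.choose n * n.choose 2 := (Nat.choose_mul hn).symm
    _ ≤ #B * (m - 2).choose (n - 2) * n.choose 2 := Nat.mul_le_mul_right _ hcount
    _ = #B * n.choose 2 * (m - 2).choose (n - 2) := by ring
    _ < m.choose 2 * (m - 2).choose (n - 2) := Nat.mul_lt_mul_of_pos_right hsparse hpos
  exact lt_irrefl _ this

theorem ThresholdAt.of_interleave {X : Type*} {H : Set (X → Bool)} {t : ℕ}
    (x : Fin (2 * t) → X) (h : Fin (2 * t) → X → Bool) (hH : ∀ j, h j ∈ H)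
    (hpat : ∀ i j, i ≠ j → (h j (x i) = true ↔ i < j)) : ThresholdAt H t := by
  refine ⟨fun i => x ⟨2 * i + 1, by omega⟩, fun j => h ⟨2 * j, by omega⟩, fun j => hH _,
    fun i j => ?_⟩
  rw [hpat _ _ (by simp only [ne_eq, Fin.ext_iff]; omega)]
  simp only [Fin.lt_def]
  omega

theorem ThresholdAt.of_subset {X : Type*} {H : Set (X → Bool)} {m t : ℕ}
    (x : Fin m → X) (h : Fin m → X → Bool) (hH : ∀ j, h j ∈ H) (S : Finset (Fin m))
    (hS : #S = 2 * t) (hpat : ∀ a ∈ S, ∀ b ∈ S, a ≠ b → (h b (x a) = true ↔ a < b)) :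
    ThresholdAt H t := by
  set c := S.orderEmbOfFin hS
  refine .of_interleave (x ∘ c) (h ∘ c) (fun j => hH _) fun i j hij => ?_
  rw [Function.comp_apply, Function.comp_apply, hpat _ (S.orderEmbOfFin_mem hS i) _
    (S.orderEmbOfFin_mem hS j) (c.injective.ne hij), c.lt_iff_lt]

theorem ApproxThresholdAt.thresholdAt {X : Type*} {H : Set (X → Bool)} {ε : ℝ} {m t : ℕ}
    (hA : ApproxThresholdAt H ε m) (hε : ε * (8 * t ^ 2) < 1) (ht : 0 < t) (htm : 2 * t ≤ m) :
    ThresholdAt H t := by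
  obtain ⟨x, h, -, -, hH, hviol⟩ := hA
  set B := univ.filter fun p : Fin m × Fin m => ¬(h p.2 (x p.1) = true ↔ p.1 < p.2) ∧ p.1 ≠ p.2
  have hB : (#B : ℝ) ≤ ε * m ^ 2 :=
    le_trans (by exact_mod_cast card_le_card (monotone_filter_right _ fun _ _ => And.left)) hviol
  have hsparse : #B * (2 * t).choose 2 < (Fintype.card (Fin m)).choose 2 := by
    have hm : (2 * t : ℝ) ≤ m := by exact_mod_cast htm
    have ht1 : (1 : ℝ) ≤ t := by exact_mod_cast ht
    have hB0 : (0 : ℝ) ≤ #B := Nat.cast_nonneg _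
    have hm0 : (0 : ℝ) < m := by linarith
    rw [Fintype.card_fin, ← Nat.cast_lt (α := ℝ)]
    push_cast [Nat.cast_choose_two]
    calc (#B : ℝ) * (2 * t * (2 * t - 1) / 2) ≤ ε * m ^ 2 * (2 * t ^ 2) := by nlinarith
      _ = ε * (8 * t ^ 2) * (m ^ 2 / 4) := by ring
      _ < m ^ 2 / 4 := mul_lt_of_lt_one_left (by positivity) hε
      _ ≤ m * (m - 1) / 2 := by nlinarith
  obtain ⟨S, hS, hclean⟩ := exists_card_eq_forall_pair_not_mem (by omega)
    (by simpa using htm) B (fun p hp => (mem_filter.1 hp).2.2) hsparse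
  refine .of_subset x h hH S hS fun a ha b hb hab => ?_
  by_contra hbad
  exact hclean a ha b hb (mem_filter.2 ⟨mem_univ _, hbad, hab⟩)

theorem ThresholdAt.approxThresholdAt {X : Type*} {H : Set (X → Bool)} {m : ℕ}
    (hT : ThresholdAt H m) {ε : ℝ} (hε : 0 ≤ ε) : ApproxThresholdAt H ε m := by
  obtain ⟨x, h, hH, hpat⟩ := hT
  refine ⟨x, h, fun i i' hx => ?_, fun j j' hh => ?_, hH, ?_⟩
  · have hi := hpat i i'
    have hi' := hpat i' i
    rw [hx] at hi
    rw [← hx] at hi'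
    simp only [hpat, lt_self_iff_false, false_iff] at hi hi'
    exact le_antisymm (not_lt.1 hi') (not_lt.1 hi)
  · have hj := hpat j j'
    have hj' := hpat j' j
    rw [← hh] at hj
    rw [hh] at hj'
    simp only [hpat, lt_self_iff_false, false_iff] at hj hj'
    exact le_antisymm (not_lt.1 hj') (not_lt.1 hj)
  · rw [filter_false_of_mem fun p _ => not_not.2 (hpat p.1 p.2), card_empty, Nat.cast_zero]
    positivity

/-- the Threshold dimension of `H` is finite iff there is `ε* > 0` such
that for all `0 < ε < ε*` the ε-approximate Threshold dimension of `H` is finite. -/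
theorem stmt_11 {X : Type*} (H : Set (X → Bool)) :
    (∃ k : ℕ, ∀ m : ℕ, ThresholdAt H m → m ≤ k) ↔
    (∃ εs : ℝ, 0 < εs ∧ ∀ ε : ℝ, 0 < ε → ε < εs →
      ∃ k : ℕ, ∀ m : ℕ, ApproxThresholdAt H ε m → m ≤ k) := by
  constructor
  · rintro ⟨k, hk⟩
    refine ⟨1 / (8 * ((k + 1 : ℕ) : ℝ) ^ 2), by positivity,
      fun ε _ hεs => ⟨2 * (k + 1), fun m hm => ?_⟩⟩
    by_contra! hlarge
    have := hk _ (hm.thresholdAt (by rwa [lt_div_iff₀ (by positivity)] at hεs) k.succ_pos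
      hlarge.le)
    omega
  · rintro ⟨εs, hεs, hfin⟩
    obtain ⟨k, hk⟩ := hfin (εs / 2) (by linarith) (by linarith)
    exact ⟨k, fun m hm => hk m (hm.approxThresholdAt (by linarith))⟩
end

section
/- Suppose (X, H) is a hypothesis class with Ldim(H) = d < ∞ and 0 < ε < 1/2. Then for every finite nonempty H' ⊆ H there is A ⊆ H' of size ≥ ε^d·|H'| such that A is both ε-good and Littlestone-opinionated, and these two notions of majority agree: for every a ∈ X and every t ∈ {0,1}, Ldim({h ∈ A : h(a) = t}) = Ldim(A) if and only if |{h ∈ A : h(a) = t}| ≥ (1−ε)|A|. -/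
open scoped Classical

/-- `A` is Littlestone-opinionated: for every `a ∈ X` exactly one of the two half-space
pieces of `A` has strictly smaller Littlestone dimension than `A`. -/
def LOpinionated {X : Type*} (A : Finset (X → Bool)) : Prop :=
  ∀ a : X,
    Xor' (Ldim {h | h ∈ A ∧ h a = false} < Ldim (↑A : Set (X → Bool)))
         (Ldim {h | h ∈ A ∧ h a = true} < Ldim (↑A : Set (X → Bool)))

/-!
If both halves `{h ∈ S | h x = false}` and `{h ∈ S | h x = true}` shatter trees of depth `k`, then
the tree with `x` at its root and these two trees below it is shattered by `S`; hence at most one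
half of a class of finite dimension keeps its Littlestone dimension.

Call a half *heavy* if it contains at least an `ε`-fraction of the class. Starting from `H'`, pass
to a heavy half of smaller dimension as long as one exists. The dimension drops at each step, so
after at most `d` steps we reach `A` with `|A| ≥ ε ^ d |H'|` in which every heavy half keeps the
full dimension. As `ε < 1/2`, for every point some half of `A` is heavy, hence of full dimension;
the other half then has smaller dimension, so it is not heavy, and the first has at least
`(1 - ε)|A|` elements. This single dichotomy gives all three properties of `A`.
-/

section Shattering

variable {X : Type*}

theorem Shatters.mono_s12 {H₁ H₂ : Set (X → Bool)} (hsub : H₁ ⊆ H₂) {n : ℕ} (h : Shatters H₁ n) :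
    Shatters H₂ n := by
  obtain ⟨t, ht⟩ := h
  refine ⟨t, fun y hy => ?_⟩
  obtain ⟨f, hf, hr⟩ := ht y hy
  exact ⟨f, hsub hf, hr⟩

theorem shatters_zero [Nonempty X] {H : Set (X → Bool)} (hH : H.Nonempty) : Shatters H 0 := by
  obtain ⟨f, hf⟩ := hH
  exact ⟨fun _ => Classical.arbitrary X, fun y hy => ⟨f, hf, fun i => absurd i.2 (by simp [hy])⟩⟩

theorem not_shatters_empty (n : ℕ) : ¬ Shatters (∅ : Set (X → Bool)) n := by
  rintro ⟨t, ht⟩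
  obtain ⟨f, hf, -⟩ := ht (List.replicate n false) (by simp)
  exact hf

theorem shatters_succ_of_forall_shatters_half {S : Set (X → Bool)} (x : X) {k : ℕ}
    (h : ∀ b : Bool, Shatters {h | h ∈ S ∧ h x = b} k) : Shatters S (k + 1) := by
  choose t ht using h
  refine ⟨fun | [] => x | b :: s => t b s, fun y hy => ?_⟩
  obtain _ | ⟨b, z⟩ := y
  · simp at hy
  obtain ⟨f, ⟨hfS, hfx⟩, hf⟩ := ht b z (by simpa using hy)
  refine ⟨f, hfS, fun ⟨i, hi⟩ => ?_⟩
  cases i with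
  | zero => simpa using hfx
  | succ j => simpa using hf ⟨j, by simpa using hi⟩

theorem Shatters.le_ldim {H : Set (X → Bool)} {n : ℕ} (h : Shatters H n) :
    (n : WithBot ℕ∞) ≤ Ldim H :=
  le_sSup ⟨n, h, rfl⟩

theorem ldim_le {H : Set (X → Bool)} {c : WithBot ℕ∞}
    (h : ∀ n : ℕ, Shatters H n → (n : WithBot ℕ∞) ≤ c) : Ldim H ≤ c :=
  sSup_le fun _ ⟨n, hn, hc⟩ => hc ▸ h n hn

theorem ldim_mono {H₁ H₂ : Set (X → Bool)} (hsub : H₁ ⊆ H₂) : Ldim H₁ ≤ Ldim H₂ :=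
  ldim_le fun _ hn => (hn.mono_s12 hsub).le_ldim

theorem ldim_empty : Ldim (∅ : Set (X → Bool)) = ⊥ :=
  le_bot_iff.mp (ldim_le fun n hn => (not_shatters_empty n hn).elim)

theorem exists_ldim_eq [Nonempty X] {S : Set (X → Bool)} (hS : S.Nonempty) {n : ℕ}
    (hn : Ldim S ≤ n) : ∃ m ≤ n, Ldim S = m ∧ Shatters S m := by
  have hbound {k : ℕ} (hk : Shatters S k) : k ≤ n := Nat.cast_le.mp (hk.le_ldim.trans hn)
  have hm : Shatters S (Nat.findGreatest (Shatters S) n) :=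
    Nat.findGreatest_spec (Nat.zero_le n) (shatters_zero hS)
  refine ⟨_, Nat.findGreatest_le n, le_antisymm (ldim_le fun k hk => ?_) hm.le_ldim, hm⟩
  exact Nat.cast_le.mpr (Nat.le_findGreatest (hbound hk) hk)

theorem shatters_of_ldim_eq [Nonempty X] {S : Set (X → Bool)} {k : ℕ} (h : Ldim S = k) :
    Shatters S k := by
  have hS : S.Nonempty := by
    rw [Set.nonempty_iff_ne_empty]
    rintro rfl
    simp [ldim_empty] at h
  obtain ⟨m, -, hm, hs⟩ := exists_ldim_eq hS h.le
  rwa [Nat.cast_injective (hm.symm.trans h)] at hs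

theorem ldim_half_lt_of_ldim_half_eq {S : Set (X → Bool)} {k : ℕ} (hS : Ldim S = k) {x : X}
    {b : Bool} (hb : Ldim {h | h ∈ S ∧ h x = b} = Ldim S) :
    Ldim {h | h ∈ S ∧ h x = !b} < Ldim S := by
  have : Nonempty X := ⟨x⟩
  refine (ldim_mono fun _ hh => hh.1).lt_of_ne fun hnb => ?_
  have hall (c : Bool) : Shatters {h | h ∈ S ∧ h x = c} k := by
    refine shatters_of_ldim_eq ?_
    obtain rfl | rfl := Bool.eq_or_eq_not c b
    · rw [hb, hS]
    · rw [hnb, hS]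
  have := (shatters_succ_of_forall_shatters_half x hall).le_ldim
  rw [hS, Nat.cast_le] at this
  omega

end Shattering

section Finite

variable {X : Type*} {ε : ℝ}

theorem card_filter_add_card_filter_not_eq (A : Finset (X → Bool)) (x : X) (b : Bool) :
    ((A.filter fun h => h x = b).card : ℝ) + (A.filter fun h => h x = !b).card = A.card := by
  rw [← Finset.card_filter_add_card_filter_not (s := A) (fun h => h x = b)]
  simp [Bool.eq_not_iff]

theorem Finset.filter_nonempty_of_mul_card_le {α : Type*} {A : Finset α} {p : α → Prop}
    [DecidablePred p] (hε : 0 < ε) (hA : A.Nonempty) (h : ε * A.card ≤ (A.filter p).card) :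
    (A.filter p).Nonempty :=
  Finset.card_pos.mp <| Nat.cast_pos.mp <| (mul_pos hε (Nat.cast_pos.mpr hA.card_pos)).trans_le h

def HeavyHalvesKeepLdim (ε : ℝ) (A : Finset (X → Bool)) : Prop :=
  ∀ (x : X) (b : Bool), ε * A.card ≤ ((A.filter fun h => h x = b).card : ℝ) →
    Ldim {h | h ∈ A ∧ h x = b} = Ldim (↑A : Set (X → Bool))

theorem exists_subset_heavyHalvesKeepLdim (hε0 : 0 < ε) (hε1 : ε ≤ 1) (n : ℕ)
    (A : Finset (X → Bool)) (hA : A.Nonempty) (hAn : Ldim (↑A : Set (X → Bool)) ≤ n) :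
    ∃ B ⊆ A, B.Nonempty ∧ ε ^ n * A.card ≤ (B.card : ℝ) ∧ HeavyHalvesKeepLdim ε B := by
  induction n using Nat.strong_induction_on generalizing A with
  | _ n ih =>
  by_cases hgood : HeavyHalvesKeepLdim ε A
  · exact ⟨A, subset_rfl, hA,
      mul_le_of_le_one_left (Nat.cast_nonneg _) (pow_le_one₀ hε0.le hε1), hgood⟩
  simp only [HeavyHalvesKeepLdim, not_forall] at hgood
  obtain ⟨x, b, hheavy, hdrop⟩ := hgood
  have : Nonempty X := ⟨x⟩
  set A' := A.filter fun h => h x = b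
  have hA' : A'.Nonempty := Finset.filter_nonempty_of_mul_card_le hε0 hA hheavy
  have hlt : Ldim (↑A' : Set (X → Bool)) < Ldim (↑A : Set (X → Bool)) := by
    rw [Finset.coe_filter]
    exact (ldim_mono fun _ hh => hh.1).lt_of_ne hdrop
  obtain ⟨m, -, hm, -⟩ := exists_ldim_eq (Finset.coe_nonempty.mpr hA') (hlt.le.trans hAn)
  have hmn : m < n := Nat.cast_lt.mp ((hm ▸ hlt).trans_le hAn)
  obtain ⟨B, hBA', hB, hBcard, hBgood⟩ := ih m hmn A' hA' hm.le
  refine ⟨B, hBA'.trans (Finset.filter_subset _ _), hB, ?_, hBgood⟩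
  calc ε ^ n * A.card ≤ ε ^ (m + 1) * A.card :=
        mul_le_mul_of_nonneg_right (pow_le_pow_of_le_one hε0.le hε1 hmn) (Nat.cast_nonneg _)
    _ = ε ^ m * (ε * A.card) := by ring
    _ ≤ ε ^ m * A'.card := mul_le_mul_of_nonneg_left hheavy (by positivity)
    _ ≤ B.card := hBcard

namespace HeavyHalvesKeepLdim

variable {A : Finset (X → Bool)} (hA : HeavyHalvesKeepLdim ε A) (hε : ε < 1 / 2)
  (hne : A.Nonempty) {n : ℕ} (hn : Ldim (↑A : Set (X → Bool)) ≤ n)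
include hA hε hne hn

theorem exists_majority (x : X) :
    ∃ b : Bool,
      (Ldim {h | h ∈ A ∧ h x = b} = Ldim (↑A : Set (X → Bool)) ∧
        (1 - ε) * A.card ≤ ((A.filter fun h => h x = b).card : ℝ)) ∧
      (Ldim {h | h ∈ A ∧ h x = !b} < Ldim (↑A : Set (X → Bool)) ∧
        ((A.filter fun h => h x = !b).card : ℝ) < ε * A.card) := by
  have : Nonempty X := ⟨x⟩
  obtain ⟨k, -, hk, -⟩ := exists_ldim_eq (Finset.coe_nonempty.mpr hne) hn
  have hpos : (0 : ℝ) < A.card := Nat.cast_pos.mpr hne.card_pos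
  obtain ⟨b, hb⟩ : ∃ b : Bool, ε * A.card ≤ ((A.filter fun h => h x = b).card : ℝ) := by
    by_contra! hlight
    have := card_filter_add_card_filter_not_eq A x true
    rw [Bool.not_true] at this
    nlinarith [hlight true, hlight false]
  have hfull := hA x b hb
  have hdrop := ldim_half_lt_of_ldim_half_eq hk hfull
  have hlight : ((A.filter fun h => h x = !b).card : ℝ) < ε * A.card := by
    by_contra! hheavy
    exact hdrop.ne (hA x (!b) hheavy)
  refine ⟨b, ⟨hfull, ?_⟩, hdrop, hlight⟩
  linarith [card_filter_add_card_filter_not_eq A x b]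

theorem epsGoodH : EpsGoodH ε A := fun x => by
  obtain ⟨b, -, -, hlight⟩ := hA.exists_majority hε hne hn x
  cases b
  · exact Or.inl hlight
  · exact Or.inr hlight

theorem lOpinionated : LOpinionated A := fun x => by
  obtain ⟨b, ⟨hfull, -⟩, hdrop, -⟩ := hA.exists_majority hε hne hn x
  cases b
  · exact Or.inr ⟨hdrop, hfull.not_lt⟩
  · exact Or.inl ⟨hdrop, hfull.not_lt⟩

theorem ldim_half_eq_iff (x : X) (t : Bool) :
    Ldim {h | h ∈ A ∧ h x = t} = Ldim (↑A : Set (X → Bool)) ↔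
      (1 - ε) * A.card ≤ ((A.filter fun h => h x = t).card : ℝ) := by
  obtain ⟨b, ⟨hfull, hmajor⟩, hdrop, hlight⟩ := hA.exists_majority hε hne hn x
  obtain rfl | rfl := Bool.eq_or_eq_not t b
  · exact iff_of_true hfull hmajor
  · have hpos : (0 : ℝ) < A.card := Nat.cast_pos.mpr hne.card_pos
    exact iff_of_false hdrop.ne (by nlinarith)

end HeavyHalvesKeepLdim

end Finite

/-- if `Ldim(H) = d < ∞` and `0 < ε < 1/2`, every finite nonempty `H' ⊆ H`
has a subset `A` with `|A| ≥ ε^d |H'|` which is ε-good and Littlestone-opinionated, and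
on which the counting majority and the Littlestone majority agree. -/
theorem stmt_12 {X : Type*} (H : Set (X → Bool)) (d : ℕ)
    (hd : Ldim H = ((d : ℕ∞) : WithBot ℕ∞))
    (ε : ℝ) (hε0 : 0 < ε) (hε : ε < 1/2) :
    ∀ H' : Finset (X → Bool), ↑H' ⊆ H → H'.Nonempty →
      ∃ A ⊆ H', ε ^ d * H'.card ≤ (A.card : ℝ) ∧ EpsGoodH ε A ∧ LOpinionated A ∧
        ∀ (a : X) (t : Bool),
          Ldim {h | h ∈ A ∧ h a = t} = Ldim (↑A : Set (X → Bool)) ↔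
            (1 - ε) * A.card ≤ ((A.filter fun h => h a = t).card : ℝ) := by
  intro H' hH' hne
  have hH'd : Ldim (↑H' : Set (X → Bool)) ≤ d := (ldim_mono hH').trans hd.le
  obtain ⟨A, hAH', hA, hcard, hheavy⟩ :=
    exists_subset_heavyHalvesKeepLdim hε0 (by linarith) d H' hne hH'd
  have hAd : Ldim (↑A : Set (X → Bool)) ≤ d := (ldim_mono (Finset.coe_subset.mpr hAH')).trans hH'd
  exact ⟨A, hAH', hcard, hheavy.epsGoodH hε hA hAd, hheavy.lOpinionated hε hA hAd,
    hheavy.ldim_half_eq_iff hε hA hAd⟩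
end
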